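/- arXiv:2602.14129 — 10 statements merged into one kernel-verified Lean document; each statement's English description precedes it below -/
import Mathlib

section
/- Let n > 2k and let F ⊆ C([n],k) be a maximal t-intersecting family. Then the family T_t(F) of all t-covers of F of minimum size τ_t(F) is itself t-intersecting. -/
open Finset

def Intersecting (t : ℕ) (𝓕 : Finset (Finset ℕ)) : Prop :=
  ∀ A ∈ 𝓕, ∀ B ∈ 𝓕, t ≤ (A ∩ B).card

def IsCover (n t : ℕ) (𝓕 : Finset (Finset ℕ)) (S : Finset ℕ) : Prop :=
  S ⊆ Finset.range n ∧ ∀ A ∈ 𝓕, t ≤ (S ∩ A).card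

noncomputable def tau (n t : ℕ) (𝓕 : Finset (Finset ℕ)) : ℕ :=
  sInf {m | ∃ S, IsCover n t 𝓕 S ∧ S.card = m}

open Classical in
noncomputable def minCovers (n t : ℕ) (𝓕 : Finset (Finset ℕ)) : Finset (Finset ℕ) :=
  ((Finset.range n).powerset).filter
    (fun S => (∀ A ∈ 𝓕, t ≤ (S ∩ A).card) ∧ S.card = tau n t 𝓕)

def MaximalIntersecting (n k t : ℕ) (𝓕 : Finset (Finset ℕ)) : Prop :=
  𝓕 ⊆ (Finset.range n).powersetCard k ∧ Intersecting t 𝓕 ∧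
    ∀ 𝓖 : Finset (Finset ℕ), 𝓖 ⊆ (Finset.range n).powersetCard k →
      Intersecting t 𝓖 → 𝓕 ⊆ 𝓖 → 𝓖 = 𝓕

theorem stmt1 (n k t : ℕ) (ht : 0 < t) (htk : t ≤ k) (hn : 2 * k < n)
    (𝓕 : Finset (Finset ℕ)) (hmax : MaximalIntersecting n k t 𝓕) :
    Intersecting t (minCovers n t 𝓕) := by
  classical
  obtain ⟨hsub, hint, hmaxi⟩ := hmax
  have hkn : k ≤ n := by omega
  -- 𝓕 is nonempty
  have hFne : 𝓕.Nonempty := by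
    by_contra h
    rw [Finset.not_nonempty_iff_eq_empty] at h
    have := hmaxi {Finset.range k} ?_ ?_ ?_
    · simp [h] at this
    · intro A hA
      simp only [Finset.mem_singleton] at hA
      subst hA
      exact Finset.mem_powersetCard.2 ⟨Finset.range_subset_range.2 hkn, Finset.card_range k⟩
    · intro A hA B hB
      simp only [Finset.mem_singleton] at hA hB
      subst hA; subst hB
      simp only [Finset.inter_self, Finset.card_range]
      omega
    · simp [h]
  obtain ⟨A₀, hA₀⟩ := hFne
  obtain ⟨hA₀sub, hA₀card⟩ := Finset.mem_powersetCard.1 (hsub hA₀)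
  have htau_le : tau n t 𝓕 ≤ k := by
    have : k ∈ {m | ∃ S, IsCover n t 𝓕 S ∧ S.card = m} :=
      ⟨A₀, ⟨hA₀sub, fun B hB => hint A₀ hA₀ B hB⟩, hA₀card⟩
    exact Nat.sInf_le this
  -- key lemma: any k-set containing a cover is in 𝓕
  have key : ∀ S : Finset ℕ, (∀ A ∈ 𝓕, t ≤ (S ∩ A).card) →
      ∀ B : Finset ℕ, B ⊆ Finset.range n → B.card = k → S ⊆ B → B ∈ 𝓕 := by
    intro S hScov B hBsub hBcard hSB
    have heq := hmaxi (insert B 𝓕) ?_ ?_ (Finset.subset_insert _ _)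
    · rw [← heq]; exact Finset.mem_insert_self _ _
    · intro C hC
      rcases Finset.mem_insert.1 hC with rfl | hC
      · exact Finset.mem_powersetCard.2 ⟨hBsub, hBcard⟩
      · exact hsub hC
    · intro C hC D hD
      rcases Finset.mem_insert.1 hC with hCB | hCF
      · rcases Finset.mem_insert.1 hD with hDB | hDF
        · rw [hCB, hDB, Finset.inter_self, hBcard]; omega
        · rw [hCB]
          calc t ≤ (S ∩ D).card := hScov D hDF
            _ ≤ (B ∩ D).card :=
              Finset.card_le_card (Finset.inter_subset_inter hSB (subset_refl D))
      · rcases Finset.mem_insert.1 hD with hDB | hDF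
        · rw [hDB]
          calc t ≤ (S ∩ C).card := hScov C hCF
            _ ≤ (C ∩ B).card := Finset.card_le_card (by
                intro x hx
                rw [Finset.mem_inter] at hx ⊢
                exact ⟨hx.2, hSB hx.1⟩)
        · exact hint C hCF D hDF
  intro S hS T hT
  rw [minCovers, Finset.mem_filter, Finset.mem_powerset] at hS hT
  obtain ⟨hSsub, hScov, hScard⟩ := hS
  obtain ⟨hTsub, hTcov, hTcard⟩ := hT
  by_contra hlt
  push_neg at hlt
  have hcards : S.card ≤ k := by omega
  have hTle : T.card ≤ k := by omega
  have hamb : k ≤ (S ∪ (Finset.range n \ T)).card := by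
    have h1 : (Finset.range n \ T).card = n - T.card := by
      rw [Finset.card_sdiff_of_subset hTsub, Finset.card_range]
    have h2 : (Finset.range n \ T).card ≤ (S ∪ (Finset.range n \ T)).card :=
      Finset.card_le_card Finset.subset_union_right
    omega
  obtain ⟨B, hSB, hBamb, hBcard⟩ :=
    Finset.exists_subsuperset_card_eq (Finset.subset_union_left (s₂ := Finset.range n \ T))
      hcards hamb
  have hBsub : B ⊆ Finset.range n := by
    intro x hx
    rcases Finset.mem_union.1 (hBamb hx) with h | h
    · exact hSsub h
    · exact (Finset.mem_sdiff.1 h).1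
  have hBF : B ∈ 𝓕 := key S hScov B hBsub hBcard hSB
  have hTB : t ≤ (T ∩ B).card := hTcov B hBF
  have hTBsub : T ∩ B ⊆ S ∩ T := by
    intro x hx
    rw [Finset.mem_inter] at hx ⊢
    rcases Finset.mem_union.1 (hBamb hx.2) with h | h
    · exact ⟨h, hx.1⟩
    · exact absurd hx.1 (Finset.mem_sdiff.1 h).2
  have := Finset.card_le_card hTBsub
  omega
end

section
/- Let F ⊆ C([n],k) be a maximal t-intersecting family with τ_t(F) = t+2, where n > 2k. Then for any subset E of [n] of size t+1, the number of minimum t-covers of F containing E is at most k − t + 1. -/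
open Finset

theorem stmt2 (n k t : ℕ) (ht : 0 < t) (htk : t ≤ k) (hn : 2 * k < n)
    (𝓕 : Finset (Finset ℕ)) (hmax : MaximalIntersecting n k t 𝓕)
    (htau : tau n t 𝓕 = t + 2)
    (E : Finset ℕ) (hE : E ⊆ Finset.range n) (hEcard : E.card = t + 1) :
    ((minCovers n t 𝓕).filter (fun S => E ⊆ S)).card ≤ k - t + 1 := by
  classical
  -- E is not a t-cover, so some A ∈ 𝓕 meets E in fewer than t points
  obtain ⟨A, hA𝓕, hEA⟩ : ∃ A ∈ 𝓕, (E ∩ A).card < t := by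
    by_contra h
    push_neg at h
    have hmem : (t + 1) ∈ {m | ∃ S, IsCover n t 𝓕 S ∧ S.card = m} :=
      ⟨E, ⟨hE, h⟩, hEcard⟩
    have := Nat.sInf_le hmem
    unfold tau at htau
    omega
  have hAcard : A.card = k := by
    have := hmax.1 hA𝓕
    exact (Finset.mem_powersetCard.mp this).2
  set G := (minCovers n t 𝓕).filter (fun S => E ⊆ S) with hG
  -- basic facts for S ∈ G
  have hGfacts : ∀ S ∈ G, E ⊆ S ∧ (S \ E).card = 1 ∧ S \ E ⊆ A ∧ (E ∩ A).card + 1 = t := by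
    intro S hS
    rw [hG, Finset.mem_filter] at hS
    obtain ⟨hSmc, hES⟩ := hS
    rw [minCovers, Finset.mem_filter] at hSmc
    obtain ⟨-, hcov, hScard⟩ := hSmc
    rw [htau] at hScard
    have hsd : (S \ E).card = 1 := by
      rw [Finset.card_sdiff_of_subset hES, hScard, hEcard]
      omega
    have hSA : t ≤ (S ∩ A).card := hcov A hA𝓕
    have hsplit : S ∩ A ⊆ (E ∩ A) ∪ ((S \ E) ∩ A) := by
      intro x hx
      rw [Finset.mem_inter] at hx
      by_cases hxE : x ∈ E
      · exact Finset.mem_union_left _ (Finset.mem_inter.mpr ⟨hxE, hx.2⟩)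
      · exact Finset.mem_union_right _
          (Finset.mem_inter.mpr ⟨Finset.mem_sdiff.mpr ⟨hx.1, hxE⟩, hx.2⟩)
    have hle : (S ∩ A).card ≤ (E ∩ A).card + ((S \ E) ∩ A).card :=
      le_trans (Finset.card_le_card hsplit) (Finset.card_union_le _ _)
    have hint_le : ((S \ E) ∩ A).card ≤ 1 := by
      calc ((S \ E) ∩ A).card ≤ (S \ E).card := Finset.card_le_card inter_subset_left
        _ = 1 := hsd
    have h1 : 1 ≤ ((S \ E) ∩ A).card := by omega
    have heq : (S \ E) ∩ A = S \ E := by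
      apply Finset.eq_of_subset_of_card_le inter_subset_left
      omega
    refine ⟨hES, hsd, ?_, by omega⟩
    intro x hx
    rw [← heq] at hx
    exact (Finset.mem_inter.mp hx).2
  rcases G.eq_empty_or_nonempty with h | ⟨S₀, hS₀⟩
  · rw [h]; simp
  · obtain ⟨-, -, -, hEAeq⟩ := hGfacts S₀ hS₀
    have hinj : Set.InjOn (fun S => S \ E) G := by
      intro S1 h1 S2 h2 heq
      obtain ⟨hE1, -, -, -⟩ := hGfacts S1 h1
      obtain ⟨hE2, -, -, -⟩ := hGfacts S2 h2
      simp only at heq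
      have : E ∪ (S1 \ E) = E ∪ (S2 \ E) := by rw [heq]
      rwa [Finset.union_sdiff_of_subset hE1, Finset.union_sdiff_of_subset hE2] at this
    have hcard : G.card = (G.image (fun S => S \ E)).card :=
      (Finset.card_image_of_injOn hinj).symm
    have hsub : G.image (fun S => S \ E) ⊆ (A \ E).powersetCard 1 := by
      intro X hX
      rw [Finset.mem_image] at hX
      obtain ⟨S, hS, rfl⟩ := hX
      obtain ⟨hES, hsd, hSA, -⟩ := hGfacts S hS
      rw [Finset.mem_powersetCard]
      refine ⟨?_, hsd⟩
      intro x hx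
      exact Finset.mem_sdiff.mpr ⟨hSA hx, (Finset.mem_sdiff.mp hx).2⟩
    have hAE : (A \ E).card = k - t + 1 := by
      have h1 : (A \ E).card + (A ∩ E).card = A.card := Finset.card_sdiff_add_card_inter _ _
      rw [Finset.inter_comm] at h1
      omega
    calc G.card = (G.image (fun S => S \ E)).card := hcard
      _ ≤ ((A \ E).powersetCard 1).card := Finset.card_le_card hsub
      _ = (A \ E).card.choose 1 := Finset.card_powersetCard _ _
      _ = (A \ E).card := Nat.choose_one_right _
      _ = k - t + 1 := hAE
end

section
/- Let n > 2k, k ≥ t+3, and let F ⊆ C([n],k) be a maximal t-intersecting family with τ_t(F) = t+2. If every minimum t-cover of F contains a fixed t-set T ⊆ [n], then the number of minimum t-covers of F is at most (k−t)(k−t+1) + 1. -/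
/-!
Every minimum `t`-cover is `T` together with two points outside `T`, so the minimum covers
correspond to a family of pairs. If some `A ∈ 𝓕` meets `T` in at most `t - 2` points, every
pair lies in the `(k - t + 2)`-set `A \ T`. Otherwise `T` and every `T ∪ {x}` are too small to be
covers; the members of `𝓕` witnessing this meet `T` in exactly `t - 1` points, and every pair
meets `A \ T`, a set of size `k - t + 1`, for each such witness `A`. Take two witnesses with
`B₀ = A₀ \ T ⊄ B₁ = A₁ \ T`; they meet since `𝓕` is `t`-intersecting. A pair through a point
`z ∈ B₀ ∩ B₁` is determined by its second point, which lies in `A \ T` for a witness `A ∌ z`;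
every other pair runs between `B₀ \ B₁` and `B₁ \ B₀`. With `c = |B₀ ∩ B₁|` and
`d = |B₀ \ B₁| = |B₁ \ B₀|` this gives at most `c (c + d) + d² ≤ (c + d - 1)(c + d) + 1` covers.
-/

open Finset

theorem choose_two_add_two_le (m : ℕ) : (m + 2).choose 2 ≤ m * (m + 1) + 1 := by
  rw [Nat.choose_two_right]
  apply Nat.div_le_of_le_mul
  rw [show m + 2 - 1 = m + 1 by omega]
  nlinarith [Nat.le_mul_self m]

-- The difference of the two sides is `(c - 1) * (d - 1)`.
theorem mul_add_mul_le {c d m : ℕ} (hc : 0 < c) (hd : 0 < d) (hm : c + d = m + 1) :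
    c * (m + 1) + d * d ≤ m * (m + 1) + 1 := by
  obtain ⟨c, rfl⟩ := Nat.exists_eq_add_of_le' hc
  obtain ⟨d, rfl⟩ := Nat.exists_eq_add_of_le' hd
  obtain rfl : m = c + d + 1 := by omega
  nlinarith

section Pairs

variable {α : Type*} [DecidableEq α]

theorem eq_pair_of_card_eq_two {s : Finset α} {x y : α} (hs : #s = 2) (hx : x ∈ s) (hy : y ∈ s)
    (hxy : x ≠ y) : s = {x, y} :=
  (eq_of_subset_of_card_le (insert_subset hx (singleton_subset_iff.2 hy))
    (by rw [hs, card_pair hxy])).symm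

theorem card_filter_mem_le_card {𝓟 : Finset (Finset α)} {B : Finset α} {z : α}
    (h𝓟 : ∀ P ∈ 𝓟, #P = 2) (hB : ∀ P ∈ 𝓟, (P ∩ B).Nonempty) (hz : z ∉ B) :
    #(𝓟.filter (z ∈ ·)) ≤ #B := by
  refine (card_le_card fun P hP => ?_).trans (card_image_le (s := B) (f := fun w => {z, w}))
  obtain ⟨hP, hzP⟩ := mem_filter.1 hP
  obtain ⟨w, hw⟩ := hB P hP
  obtain ⟨hwP, hwB⟩ := mem_inter.1 hw
  exact mem_image.2 ⟨w, hwB,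
    (eq_pair_of_card_eq_two (h𝓟 P hP) hzP hwP (by rintro rfl; exact hz hwB)).symm⟩

theorem card_le_of_forall_inter_nonempty {𝓟 : Finset (Finset α)} {B₀ B₁ : Finset α} {m : ℕ}
    (h𝓟 : ∀ P ∈ 𝓟, #P = 2) (h₀ : ∀ P ∈ 𝓟, (P ∩ B₀).Nonempty)
    (h₁ : ∀ P ∈ 𝓟, (P ∩ B₁).Nonempty) (hm : ∀ z ∈ B₀ ∩ B₁, #(𝓟.filter (z ∈ ·)) ≤ m) :
    #𝓟 ≤ #(B₀ ∩ B₁) * m + #(B₀ \ B₁) * #(B₁ \ B₀) := by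
  rw [← card_filter_add_card_filter_not (s := 𝓟) (fun P => (P ∩ (B₀ ∩ B₁)).Nonempty)]
  gcongr ?_ + ?_
  · calc _ ≤ #((B₀ ∩ B₁).biUnion fun z => 𝓟.filter (z ∈ ·)) := card_le_card ?_
      _ ≤ ∑ z ∈ B₀ ∩ B₁, #(𝓟.filter (z ∈ ·)) := card_biUnion_le
      _ ≤ ∑ z ∈ B₀ ∩ B₁, m := sum_le_sum hm
      _ = #(B₀ ∩ B₁) * m := by rw [sum_const, smul_eq_mul]
    intro P hP
    obtain ⟨hP, z, hz⟩ := mem_filter.1 hP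
    obtain ⟨hzP, hzC⟩ := mem_inter.1 hz
    exact mem_biUnion.2 ⟨z, hzC, mem_filter.2 ⟨hP, hzP⟩⟩
  · rw [← card_product]
    refine (card_le_card fun P hP => ?_).trans
      (card_image_le (f := fun p : α × α => ({p.1, p.2} : Finset α)))
    obtain ⟨hP, hPC⟩ := mem_filter.1 hP
    obtain ⟨x, hx⟩ := h₀ P hP
    obtain ⟨y, hy⟩ := h₁ P hP
    obtain ⟨hxP, hx₀⟩ := mem_inter.1 hx
    obtain ⟨hyP, hy₁⟩ := mem_inter.1 hy
    have hx₁ : x ∉ B₁ := fun hx₁ => hPC ⟨x, mem_inter.2 ⟨hxP, mem_inter.2 ⟨hx₀, hx₁⟩⟩⟩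
    have hy₀ : y ∉ B₀ := fun hy₀ => hPC ⟨y, mem_inter.2 ⟨hyP, mem_inter.2 ⟨hy₀, hy₁⟩⟩⟩
    refine mem_image.2 ⟨(x, y), mem_product.2 ⟨mem_sdiff.2 ⟨hx₀, hx₁⟩, mem_sdiff.2 ⟨hy₁, hy₀⟩⟩,
      (eq_pair_of_card_eq_two (h𝓟 P hP) hxP hyP ?_).symm⟩
    rintro rfl
    exact hy₀ hx₀

theorem card_le_of_forall_inter_nonempty_of_card_eq_succ {𝓟 : Finset (Finset α)}
    {B₀ B₁ : Finset α} {m : ℕ} (h𝓟 : ∀ P ∈ 𝓟, #P = 2)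
    (h₀ : ∀ P ∈ 𝓟, (P ∩ B₀).Nonempty) (h₁ : ∀ P ∈ 𝓟, (P ∩ B₁).Nonempty)
    (hB₀ : #B₀ = m + 1) (hB₁ : #B₁ = m + 1) (hB : (B₀ ∩ B₁).Nonempty)
    (hB₀₁ : (B₀ \ B₁).Nonempty) (hm : ∀ z ∈ B₀ ∩ B₁, #(𝓟.filter (z ∈ ·)) ≤ m + 1) :
    #𝓟 ≤ m * (m + 1) + 1 := by
  have hbound := card_le_of_forall_inter_nonempty h𝓟 h₀ h₁ hm
  have hsplit₀ := card_inter_add_card_sdiff B₀ B₁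
  have hsplit₁ := card_inter_add_card_sdiff B₁ B₀
  rw [inter_comm] at hsplit₁
  rw [show #(B₁ \ B₀) = #(B₀ \ B₁) by omega] at hbound
  exact hbound.trans (mul_add_mul_le (card_pos.2 hB) (card_pos.2 hB₀₁) (by omega))

end Pairs

section Link

variable {α : Type*} [DecidableEq α] {t : ℕ}

theorem card_inter_eq_card_inter_add_card_sdiff_inter {S T : Finset α} (A : Finset α)
    (hTS : T ⊆ S) : #(S ∩ A) = #(T ∩ A) + #((S \ T) ∩ A) := by
  rw [← card_union_of_disjoint (disjoint_sdiff.mono inter_subset_left inter_subset_left),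
    ← union_inter_distrib_right, union_sdiff_of_subset hTS]

theorem card_inter_add_one_eq_and_notMem {T A : Finset α} {x : α}
    (h : #(insert x T ∩ A) < t) (hTA : t ≤ #(T ∩ A) + 1) (hx : x ∉ T) :
    #(T ∩ A) + 1 = t ∧ x ∉ A := by
  have hle : #(T ∩ A) ≤ #(insert x T ∩ A) := card_le_card (inter_subset_inter_right
    (subset_insert x T))
  refine ⟨by omega, fun hxA => ?_⟩
  rw [insert_inter_of_mem hxA, card_insert_of_notMem fun h => hx (mem_inter.1 h).1] at h
  omega

theorem inter_sdiff_nonempty {P T A : Finset α} (hPT : Disjoint P T)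
    (hcov : t ≤ #(T ∩ A) + #(P ∩ A)) (hTA : #(T ∩ A) < t) : (P ∩ (A \ T)).Nonempty := by
  obtain ⟨x, hx⟩ : (P ∩ A).Nonempty := card_pos.1 (by omega)
  obtain ⟨hxP, hxA⟩ := mem_inter.1 hx
  exact ⟨x, mem_inter.2 ⟨hxP, mem_sdiff.2 ⟨hxA, disjoint_left.1 hPT hxP⟩⟩⟩

theorem sdiff_inter_sdiff_nonempty {T A₀ A₁ : Finset α} (h : t ≤ #(A₀ ∩ A₁))
    (hTA₁ : #(T ∩ A₁) < t) : ((A₀ \ T) ∩ (A₁ \ T)).Nonempty := by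
  have hsub : A₀ ∩ A₁ ⊆ (T ∩ A₁) ∪ ((A₀ \ T) ∩ (A₁ \ T)) := by
    intro x hx
    by_cases hxT : x ∈ T <;> simp_all
  have := (card_le_card hsub).trans (card_union_le _ _)
  exact card_pos.1 (by omega)

end Link

section Covers

variable {n k t : ℕ} {𝓕 : Finset (Finset ℕ)}

/-- `T ∪ P` is a `t`-cover of `𝓕` with exactly two points outside `T`. -/
def IsCompletingPair (t : ℕ) (𝓕 : Finset (Finset ℕ)) (T P : Finset ℕ) : Prop :=
  #P = 2 ∧ Disjoint P T ∧ ∀ A ∈ 𝓕, t ≤ #(T ∩ A) + #(P ∩ A)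

theorem mem_minCovers {S : Finset ℕ} :
    S ∈ minCovers n t 𝓕 ↔ S ⊆ range n ∧ (∀ A ∈ 𝓕, t ≤ #(S ∩ A)) ∧ #S = tau n t 𝓕 := by
  classical
  simp [minCovers]

theorem exists_card_inter_lt_of_card_lt_tau {S : Finset ℕ} (hS : S ⊆ range n)
    (h : #S < tau n t 𝓕) : ∃ A ∈ 𝓕, #(S ∩ A) < t := by
  by_contra! h'
  exact (Nat.sInf_le ⟨S, ⟨hS, h'⟩, rfl⟩ : tau n t 𝓕 ≤ #S).not_gt h

theorem isCompletingPair_sdiff {S T : Finset ℕ} (hS : S ∈ minCovers n t 𝓕) (hTS : T ⊆ S)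
    (htau : tau n t 𝓕 = #T + 2) : IsCompletingPair t 𝓕 T (S \ T) := by
  obtain ⟨-, hScov, hScard⟩ := mem_minCovers.1 hS
  refine ⟨by rw [card_sdiff_of_subset hTS, hScard, htau]; omega, sdiff_disjoint, fun A hA => ?_⟩
  rw [← card_inter_eq_card_inter_add_card_sdiff_inter A hTS]
  exact hScov A hA

theorem card_le_choose_of_card_inter_add_two_le {𝓟 : Finset (Finset ℕ)} {T A : Finset ℕ}
    (h𝓟 : ∀ P ∈ 𝓟, IsCompletingPair t 𝓕 T P)
    (hA : A ∈ 𝓕) (hAk : #A = k) (hTA : #(T ∩ A) + 2 ≤ t) :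
    #𝓟 ≤ (k - t + 2).choose 2 := by
  rcases 𝓟.eq_empty_or_nonempty with rfl | ⟨P₀, hP₀⟩
  · simp
  have hsub : ∀ P ∈ 𝓟, P ⊆ A \ T := by
    intro P hP
    obtain ⟨hP2, hPT, hcov⟩ := h𝓟 P hP
    have hPA : P ∩ A = P := eq_of_subset_of_card_le inter_subset_left (by have := hcov A hA; omega)
    exact subset_sdiff.2 ⟨inter_eq_left.1 hPA, hPT⟩
  have hAT : #(A \ T) = k - t + 2 := by
    obtain ⟨hP2, -, hcov⟩ := h𝓟 P₀ hP₀
    have := card_le_card (inter_subset_left : P₀ ∩ A ⊆ P₀)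
    have := card_le_card (hsub P₀ hP₀)
    have := card_sdiff_add_card_inter A T
    rw [inter_comm] at this
    have := hcov A hA
    omega
  calc #𝓟 ≤ #((A \ T).powersetCard 2) :=
        card_le_card fun P hP => mem_powersetCard.2 ⟨hsub P hP, (h𝓟 P hP).1⟩
    _ = (k - t + 2).choose 2 := by rw [card_powersetCard, hAT]

theorem card_le_of_forall_le_card_inter_add_one {𝓟 : Finset (Finset ℕ)} {T : Finset ℕ}
    (h𝓕k : 𝓕 ⊆ (range n).powersetCard k) (h𝓕t : Intersecting t 𝓕)
    (h𝓟 : ∀ P ∈ 𝓟, IsCompletingPair t 𝓕 T P)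
    (hT : ∃ A ∈ 𝓕, #(T ∩ A) < t)
    (hinsert : ∀ x ∈ range n, x ∉ T → ∃ A ∈ 𝓕, #(insert x T ∩ A) < t)
    (hTA : ∀ A ∈ 𝓕, t ≤ #(T ∩ A) + 1) :
    #𝓟 ≤ (k - t) * (k - t + 1) + 1 := by
  have hwitness : ∀ x ∈ range n, x ∉ T → ∃ A ∈ 𝓕, #(T ∩ A) < t ∧ x ∉ A := by
    intro x hx hxT
    obtain ⟨A, hA, hlt⟩ := hinsert x hx hxT
    obtain ⟨hTA', hxA⟩ := card_inter_add_one_eq_and_notMem hlt (hTA A hA) hxT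
    exact ⟨A, hA, by omega, hxA⟩
  have hmeet : ∀ A ∈ 𝓕, #(T ∩ A) < t → ∀ P ∈ 𝓟, (P ∩ (A \ T)).Nonempty :=
    fun A hA hlt P hP => inter_sdiff_nonempty (h𝓟 P hP).2.1 ((h𝓟 P hP).2.2 A hA) hlt
  have hrange : ∀ A ∈ 𝓕, A ⊆ range n := fun A hA => (mem_powersetCard.1 (h𝓕k hA)).1
  obtain ⟨A₀, hA₀, hlt₀⟩ := hT
  have htk : t ≤ k := by
    simpa [(mem_powersetCard.1 (h𝓕k hA₀)).2] using h𝓕t A₀ hA₀ A₀ hA₀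
  have hsize : ∀ A ∈ 𝓕, #(T ∩ A) < t → #(A \ T) = k - t + 1 := by
    intro A hA hlt
    have := card_sdiff_add_card_inter A T
    rw [inter_comm, (mem_powersetCard.1 (h𝓕k hA)).2] at this
    have := hTA A hA
    omega
  obtain ⟨a, ha⟩ : (A₀ \ T).Nonempty := card_pos.1 (by rw [hsize A₀ hA₀ hlt₀]; omega)
  obtain ⟨haA₀, haT⟩ := mem_sdiff.1 ha
  obtain ⟨A₁, hA₁, hlt₁, haA₁⟩ := hwitness a (hrange A₀ hA₀ haA₀) haT
  refine card_le_of_forall_inter_nonempty_of_card_eq_succ (fun P hP => (h𝓟 P hP).1)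
    (hmeet A₀ hA₀ hlt₀) (hmeet A₁ hA₁ hlt₁) (hsize A₀ hA₀ hlt₀) (hsize A₁ hA₁ hlt₁)
    (sdiff_inter_sdiff_nonempty (h𝓕t A₀ hA₀ A₁ hA₁) hlt₁)
    ⟨a, mem_sdiff.2 ⟨ha, fun h => haA₁ (mem_sdiff.1 h).1⟩⟩ fun z hz => ?_
  obtain ⟨hzA₀, hzT⟩ := mem_sdiff.1 (mem_inter.1 hz).1
  obtain ⟨A, hA, hlt, hzA⟩ := hwitness z (hrange A₀ hA₀ hzA₀) hzT
  rw [← hsize A hA hlt]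
  exact card_filter_mem_le_card (fun P hP => (h𝓟 P hP).1) (hmeet A hA hlt)
    fun h => hzA (mem_sdiff.1 h).1

end Covers

theorem stmt3_general (n k t : ℕ)
    (𝓕 : Finset (Finset ℕ)) (hmax : MaximalIntersecting n k t 𝓕)
    (htau : tau n t 𝓕 = t + 2)
    (T : Finset ℕ) (hT : T ⊆ Finset.range n) (hTcard : T.card = t)
    (hTin : ∀ S ∈ minCovers n t 𝓕, T ⊆ S) :
    (minCovers n t 𝓕).card ≤ (k - t) * (k - t + 1) + 1 := by
  obtain ⟨h𝓕k, h𝓕t, -⟩ := hmax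
  have hinj : Set.InjOn (· \ T) (minCovers n t 𝓕 : Set (Finset ℕ)) := fun S hS S' hS' h => by
    rw [← sdiff_union_of_subset (hTin S hS), ← sdiff_union_of_subset (hTin S' hS')]
    exact congrArg (· ∪ T) h
  have h𝓟 : ∀ P ∈ (minCovers n t 𝓕).image (· \ T), IsCompletingPair t 𝓕 T P :=
    forall_mem_image.2 fun S hS => isCompletingPair_sdiff hS (hTin S hS) (by rw [htau, hTcard])
  have hsmall : ∀ S ⊆ range n, #S < t + 2 → ∃ A ∈ 𝓕, #(S ∩ A) < t :=
    fun S hS h => exists_card_inter_lt_of_card_lt_tau hS (htau ▸ h)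
  rw [← card_image_of_injOn hinj]
  by_cases h : ∃ A ∈ 𝓕, #(T ∩ A) + 2 ≤ t
  · obtain ⟨A, hA, hTA⟩ := h
    exact (card_le_choose_of_card_inter_add_two_le h𝓟 hA (mem_powersetCard.1 (h𝓕k hA)).2
      hTA).trans (choose_two_add_two_le _)
  · push Not at h
    refine card_le_of_forall_le_card_inter_add_one h𝓕k h𝓕t h𝓟 (hsmall T hT (by omega))
      (fun x hx hxT => hsmall _ (insert_subset hx hT) ?_) fun A hA => by have := h A hA; omega
    rw [card_insert_of_notMem hxT]
    omega

theorem stmt3 (n k t : ℕ) (ht : 0 < t) (hk : t + 3 ≤ k) (hn : 2 * k < n)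
    (𝓕 : Finset (Finset ℕ)) (hmax : MaximalIntersecting n k t 𝓕)
    (htau : tau n t 𝓕 = t + 2)
    (T : Finset ℕ) (hT : T ⊆ Finset.range n) (hTcard : T.card = t)
    (hTin : ∀ S ∈ minCovers n t 𝓕, T ⊆ S) :
    (minCovers n t 𝓕).card ≤ (k - t) * (k - t + 1) + 1 :=
  stmt3_general n k t 𝓕 hmax htau T hT hTcard hTin
end

section
/- Let n ≥ 2k and r ≥ 2. If F_1, F_2, ..., F_r ⊆ C([n],k) are nonempty pairwise cross-intersecting families, then Σ_{i=1}^r |F_i| ≤ max{ C(n,k) − C(n−k,k) + r − 1, r·C(n−1,k−1) }. -/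
/-!
Write `N = C(n,k)`, `M = C(n-1,k-1)` and `L = C(n-k,k)`. If `𝒜` and `ℬ` are cross-intersecting,
the complements of the members of `ℬ` are `(n-k)`-sets whose `(n-2k)`-fold shadow is disjoint
from `𝒜`. By Kruskal–Katona that shadow is smallest for a colex initial segment, and for those its
size is a piecewise linear function of `m = #ℬ`, with breakpoints `(C(s,n-k), C(s,k))` and
decreasing slopes `C(s,k-1) / C(s,n-k-1)`. Being concave, it lies above its chord, which gives
`(m - 1) (C(n-1,k) - L) ≤ (N - #𝒜 - L) (M - 1)` for `1 ≤ m ≤ M`.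

If the largest family has at most `M` members the bound `r M` is immediate. Otherwise every other
family has at most `M` members (`m = M` would force the largest one down to `M`), and summing the
chord bound over them bounds the total by a linear function of the size of the largest family,
which ranges over `[M, N - L]`; its values at the two ends are `r M` and `N - L + r - 1`.
-/

open Finset

open scoped FinsetFamily

namespace Nat

theorem choose_mul_choose_le_choose_mul_choose {a b s t : ℕ} (hab : a ≤ b) (hst : s ≤ t) :
    t.choose a * s.choose b ≤ t.choose b * s.choose a := by
  rcases lt_or_ge t b with htb | hbt
  · simp [choose_eq_zero_of_lt (hst.trans_lt htb)]
  refine le_of_mul_le_mul_right ?_ (choose_pos (by omega : b - a ≤ t - a))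
  calc t.choose a * s.choose b * (t - a).choose (b - a)
      = t.choose b * (s.choose b * b.choose a) := by rw [mul_right_comm, ← choose_mul hab]; ring
    _ = t.choose b * (s.choose a * (s - a).choose (b - a)) := by rw [choose_mul hab]
    _ ≤ t.choose b * s.choose a * (t - a).choose (b - a) := by
      rw [← mul_assoc]; gcongr

theorem choose_lt_succ_choose {m j : ℕ} (hj : 0 < j) (hjm : j ≤ m + 1) :
    m.choose j < (m + 1).choose j := by
  rw [choose_eq_choose_pred_add m.succ_pos hj, succ_sub_one]
  have := choose_pos (by omega : j - 1 ≤ m)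
  omega

theorem two_le_choose {m j : ℕ} (hj : 0 < j) (hjm : j < m) : 2 ≤ m.choose j := by
  have h := choose_lt_succ_choose (m := m - 1) hj (by omega)
  rw [Nat.sub_add_cancel (by omega)] at h
  have := choose_pos (by omega : j ≤ m - 1)
  omega

theorem choose_add_sum_Ico_choose {a b : ℕ} (j : ℕ) (hab : a ≤ b) :
    a.choose (j + 1) + ∑ i ∈ Ico a b, i.choose j = b.choose (j + 1) := by
  have hrange (c : ℕ) : ∑ i ∈ range c, i.choose j = c.choose (j + 1) := by
    induction c with
    | zero => simp
    | succ c ih => rw [sum_range_succ, ih, choose_succ_succ', add_comm]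
  rw [← hrange, ← hrange, sum_range_add_sum_Ico _ hab]

end Nat

theorem Finset.sum_mul_sum_le_sum_mul_sum {ι R : Type*} [CommSemiring R] [PartialOrder R]
    [IsOrderedAddMonoid R] {I J : Finset ι} {p q : ι → R}
    (h : ∀ i ∈ I, ∀ j ∈ J, p i * q j ≤ q i * p j) :
    (∑ i ∈ I, p i) * ∑ j ∈ J, q j ≤ (∑ i ∈ I, q i) * ∑ j ∈ J, p j := by
  rw [sum_mul_sum, sum_mul_sum]
  exact sum_le_sum fun i hi => sum_le_sum fun j hj => h i hi j hj

/- The points `(C(s,l), C(s,k))` for `l ≤ s ≤ t` span a concave polygon: the slope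
`C(s,k-1) / C(s,l-1)` of its edge from `s` to `s + 1` decreases in `s`. Hence a point
`(C(s,l) + e, f)` lying above that edge also lies above the chord from `s = l` to `s = t`. -/
theorem choose_chord_of_local_bound {k l s t : ℕ} (hk : 1 ≤ k) (hkl : k ≤ l) (hls : l ≤ s)
    (hst : s < t) {e f : ℤ} (he₀ : 0 ≤ e) (he : e ≤ s.choose (l - 1))
    (hf : s.choose k * s.choose (l - 1) + e * s.choose (k - 1) ≤ f * s.choose (l - 1)) :
    (s.choose l + e - 1) * (t.choose k - l.choose k) ≤ (f - l.choose k) * (t.choose l - 1) := by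
  obtain ⟨k, rfl⟩ := Nat.exists_eq_add_of_le' hk
  obtain ⟨l, rfl⟩ := Nat.exists_eq_add_of_le' (hk.trans hkl)
  simp only [Nat.add_sub_cancel] at he hf ⊢
  have slope {i j : ℕ} (hij : i ≤ j) : i.choose l * j.choose k ≤ i.choose k * j.choose l := by
    linarith [Nat.choose_mul_choose_le_choose_mul_choose (by omega : k ≤ l) hij]
  set P := ∑ i ∈ Ico (l + 1) s, i.choose l
  set Q := ∑ i ∈ Ico (l + 1) s, i.choose k
  set P' := ∑ i ∈ Ico (s + 1) t, i.choose l
  set Q' := ∑ i ∈ Ico (s + 1) t, i.choose k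
  have hP : 1 + P = s.choose (l + 1) := by
    simpa using Nat.choose_add_sum_Ico_choose l hls
  have hQ : (l + 1).choose (k + 1) + Q = s.choose (k + 1) := Nat.choose_add_sum_Ico_choose k hls
  have hP' : s.choose l + s.choose (l + 1) + P' = t.choose (l + 1) := by
    rw [← Nat.choose_succ_succ', Nat.choose_add_sum_Ico_choose l hst]
  have hQ' : s.choose k + s.choose (k + 1) + Q' = t.choose (k + 1) := by
    rw [← Nat.choose_succ_succ', Nat.choose_add_sum_Ico_choose k hst]
  have h₁ : P * s.choose k ≤ Q * s.choose l := by
    simpa using sum_mul_sum_le_sum_mul_sum (I := Ico (l + 1) s) (J := {s})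
      (p := (·.choose l)) (q := (·.choose k)) fun i hi j hj =>
      slope ((mem_Ico.1 hi).2.le.trans (mem_singleton.1 hj).ge)
  have h₂ : P * Q' ≤ Q * P' := by
    refine sum_mul_sum_le_sum_mul_sum fun i hi j hj => slope ?_
    linarith [(mem_Ico.1 hi).2, (mem_Ico.1 hj).1]
  have h₃ : s.choose l * Q' ≤ s.choose k * P' := by
    simpa using sum_mul_sum_le_sum_mul_sum (I := {s}) (J := Ico (s + 1) t)
      (p := (·.choose l)) (q := (·.choose k)) fun i hi j hj =>
      slope ((mem_singleton.1 hi).le.trans (Nat.le_of_succ_le (mem_Ico.1 hj).1))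
  have hp : 0 < s.choose l := Nat.choose_pos (by omega)
  zify at hP hQ hP' hQ' h₁ h₂ h₃ hp
  refine le_of_mul_le_mul_left ?_ hp
  have h₄ := mul_le_mul_of_nonneg_right hf (by linarith : (0 : ℤ) ≤ P + s.choose l + P')
  have h₅ := mul_nonneg (sub_nonneg.2 he) (sub_nonneg.2 h₁)
  have h₆ := mul_nonneg hp.le (sub_nonneg.2 h₂)
  have h₇ := mul_nonneg he₀ (sub_nonneg.2 h₃)
  rw [← hQ', ← hP', ← hQ, ← hP]
  rw [← hQ] at h₄
  linear_combination h₄ + h₅ + h₆ + h₇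

namespace Finset

variable {α : Type*}

section Shadow

variable [DecidableEq α]

theorem card_mul_choose_le_card_shadow_iterate_mul {S : Finset α} {ℬ : Finset (Finset α)}
    {a b : ℕ} (hab : a ≤ b) (hℬ : ℬ ⊆ S.powersetCard b) :
    #ℬ * (#S).choose a ≤ #(∂^[b - a] ℬ) * (#S).choose b := by
  obtain rfl | ⟨B₀, hB₀⟩ := ℬ.eq_empty_or_nonempty
  · simp
  have hbS : b ≤ #S := by
    obtain ⟨hB₀S, hB₀b⟩ := mem_powersetCard.1 (hℬ hB₀)
    exact hB₀b ▸ card_le_card hB₀S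
  have hcount : #ℬ * b.choose a ≤ #(∂^[b - a] ℬ) * (#S - a).choose (b - a) := by
    refine card_mul_le_card_mul (fun B A => A ⊆ B) (fun B hB => ?_) (fun A hA => ?_)
    · obtain ⟨-, hBb⟩ := mem_powersetCard.1 (hℬ hB)
      rw [← hBb, ← card_powersetCard]
      refine card_le_card fun A hA => (mem_bipartiteAbove _).2 ⟨?_, (mem_powersetCard.1 hA).1⟩
      obtain ⟨hAB, hAa⟩ := mem_powersetCard.1 hA
      exact mem_shadow_iterate_iff_exists_sdiff.2
        ⟨B, hB, hAB, by rw [card_sdiff_of_subset hAB, hAa, hBb]⟩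
    · obtain ⟨B, hB, hAB, hBA⟩ := mem_shadow_iterate_iff_exists_sdiff.1 hA
      obtain ⟨hBS, hBb⟩ := mem_powersetCard.1 (hℬ hB)
      have hAa : #A = a := by
        have := card_le_card hAB
        rw [card_sdiff_of_subset hAB] at hBA; omega
      rw [← hAa, ← card_sdiff_of_subset (hAB.trans hBS), ← card_powersetCard]
      refine card_le_card_of_injOn (· \ A) (fun B' hB' => ?_)
        ((superset_injOn_sdiff A).mono fun B' hB' => ((mem_bipartiteBelow _).1 hB').2)
      obtain ⟨hB'ℬ, hAB'⟩ := (mem_bipartiteBelow _).1 hB'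
      obtain ⟨hB'S, hB'b⟩ := mem_powersetCard.1 (hℬ hB'ℬ)
      exact mem_powersetCard.2 ⟨sdiff_subset_sdiff hB'S le_rfl,
        by rw [card_sdiff_of_subset hAB', hB'b]⟩
  refine Nat.le_of_mul_le_mul_right ?_ (Nat.choose_pos (by omega : b - a ≤ #S - a))
  calc #ℬ * (#S).choose a * (#S - a).choose (b - a)
      = #ℬ * b.choose a * (#S).choose b := by rw [mul_assoc, ← Nat.choose_mul hab]; ring
    _ ≤ #(∂^[b - a] ℬ) * (#S - a).choose (b - a) * (#S).choose b := by gcongr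
    _ = _ := by ring

theorem image_insert_shadow_iterate_memberSubfamily_subset (𝒜 : Finset (Finset α)) (a : α) (i : ℕ) :
    (∂^[i] (𝒜.memberSubfamily a)).image (insert a) ⊆ ∂^[i] 𝒜 := by
  simp only [subset_iff, mem_image, mem_shadow_iterate_iff_exists_sdiff, mem_memberSubfamily]
  rintro _ ⟨T, ⟨B, ⟨hB, haB⟩, hTB, hBT⟩, rfl⟩
  refine ⟨insert a B, hB, insert_subset_insert a hTB, ?_⟩
  rw [insert_sdiff_insert, sdiff_insert_of_notMem haB, hBT]

theorem powersetCard_subset_shadow_iterate {S : Finset α} {𝒜 : Finset (Finset α)} {k l : ℕ}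
    (hkl : k ≤ l) (hlS : l ≤ #S) (h : S.powersetCard l ⊆ 𝒜) :
    S.powersetCard k ⊆ ∂^[l - k] 𝒜 := by
  intro T hT
  obtain ⟨hTS, hTk⟩ := mem_powersetCard.1 hT
  obtain ⟨A, hTA, hAS, hAl⟩ := exists_subsuperset_card_eq hTS (hTk.trans_le hkl) hlS
  exact mem_shadow_iterate_iff_exists_sdiff.2
    ⟨A, h (mem_powersetCard.2 ⟨hAS, hAl⟩), hTA, by rw [card_sdiff_of_subset hTA, hAl, hTk]⟩

theorem choose_add_card_shadow_iterate_memberSubfamily_le {S : Finset α}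
    {𝒜 : Finset (Finset α)} {a : α} {k l : ℕ} (haS : a ∉ S) (hkl : k ≤ l) (hlS : l ≤ #S)
    (h : S.powersetCard l ⊆ 𝒜) :
    (#S).choose k + #(∂^[l - k] (𝒜.memberSubfamily a)) ≤ #(∂^[l - k] 𝒜) := by
  have haT {T} (hT : T ∈ ∂^[l - k] (𝒜.memberSubfamily a)) : a ∉ T := by
    obtain ⟨B, hB, hTB, -⟩ := mem_shadow_iterate_iff_exists_sdiff.1 hT
    exact fun haT => (mem_memberSubfamily.1 hB).2 (hTB haT)
  have hinj : Set.InjOn (insert a) (∂^[l - k] (𝒜.memberSubfamily a) : Set (Finset α)) :=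
    fun T hT T' hT' hTT' => by rw [← erase_insert (haT hT), ← erase_insert (haT hT'), hTT']
  have hdisj : Disjoint (S.powersetCard k)
      ((∂^[l - k] (𝒜.memberSubfamily a)).image (insert a)) := by
    refine disjoint_right.2 fun T hT hTk => ?_
    obtain ⟨T, -, rfl⟩ := mem_image.1 hT
    exact haS ((mem_powersetCard.1 hTk).1 (mem_insert_self a T))
  calc (#S).choose k + #(∂^[l - k] (𝒜.memberSubfamily a))
      = #(S.powersetCard k ∪ (∂^[l - k] (𝒜.memberSubfamily a)).image (insert a)) := by
        rw [card_union_of_disjoint hdisj, card_image_of_injOn hinj, card_powersetCard]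
    _ ≤ #(∂^[l - k] 𝒜) := card_le_card (union_subset
        (powersetCard_subset_shadow_iterate hkl hlS h)
        (image_insert_shadow_iterate_memberSubfamily_subset 𝒜 a (l - k)))

end Shadow

namespace Colex

variable [LinearOrder α] {S : Finset α} {𝒞 : Finset (Finset α)} {r : ℕ}

theorem isInitSeg_powersetCard (hS : IsLowerSet (S : Set α)) (r : ℕ) :
    IsInitSeg (S.powersetCard r) r := by
  refine ⟨Set.sized_powersetCard S r, fun A B hA ⟨hBA, hB⟩ => mem_powersetCard.2 ⟨?_, hB⟩⟩
  intro x hxB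
  by_cases hxA : x ∈ A
  · exact (mem_powersetCard.1 hA).1 hxA
  obtain ⟨y, hyA, -, hxy⟩ := (toColex_lt_toColex.1 hBA).2 hxB hxA
  exact hS hxy ((mem_powersetCard.1 hA).1 hyA)

theorem IsInitSeg.powersetCard_subset (h : IsInitSeg 𝒞 r) (hS : IsLowerSet (S : Set α))
    (hc : (#S).choose r ≤ #𝒞) : S.powersetCard r ⊆ 𝒞 := by
  obtain h𝒞 | h𝒞 := h.total (isInitSeg_powersetCard hS r)
  · rw [eq_of_subset_of_card_le h𝒞 (by rwa [card_powersetCard])]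
  · exact h𝒞

theorem IsInitSeg.subset_powersetCard (h : IsInitSeg 𝒞 r) (hS : IsLowerSet (S : Set α))
    (hc : #𝒞 ≤ (#S).choose r) : 𝒞 ⊆ S.powersetCard r := by
  obtain h𝒞 | h𝒞 := h.total (isInitSeg_powersetCard hS r)
  · exact h𝒞
  · rw [eq_of_subset_of_card_le h𝒞 (by rwa [card_powersetCard])]

theorem exists_isInitSeg_card_eq [Fintype α] {m : ℕ} (hm : m ≤ (Fintype.card α).choose r) :
    ∃ 𝒞 : Finset (Finset α), IsInitSeg 𝒞 r ∧ #𝒞 = m := by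
  induction m with
  | zero => exact ⟨∅, by simp, rfl⟩
  | succ m ih =>
    obtain ⟨𝒞, h𝒞, rfl⟩ := ih (by omega)
    have hne : (univ.powersetCard r \ 𝒞).Nonempty := by
      rw [sdiff_nonempty]
      intro hsub
      have := card_le_card hsub
      rw [card_powersetCard, card_univ] at this
      omega
    obtain ⟨A, hA, hmin⟩ := exists_min_image _ toColex hne
    obtain ⟨hAr, hA𝒞⟩ := mem_sdiff.1 hA
    refine ⟨insert A 𝒞, ⟨?_, fun B C hB ⟨hCB, hC⟩ => ?_⟩, card_insert_of_notMem hA𝒞⟩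
    · exact fun B hB => (mem_insert.1 hB).elim (· ▸ (mem_powersetCard.1 hAr).2) (h𝒞.1 ·)
    obtain rfl | hB := mem_insert.1 hB
    · by_contra hC𝒞
      exact (hmin C (mem_sdiff.2 ⟨mem_powersetCard.2 ⟨subset_univ C, hC⟩,
        fun h => hC𝒞 (mem_insert_of_mem h)⟩)).not_gt hCB
    · exact mem_insert_of_mem (h𝒞.2 hB ⟨hCB, hC⟩)

section Interval

variable [LocallyFiniteOrderBot α] {a : α}

theorem IsInitSeg.nonMemberSubfamily_eq (h : IsInitSeg 𝒞 r) (h₁ : (#(Iio a)).choose r ≤ #𝒞)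
    (h₂ : #𝒞 ≤ (#(Iic a)).choose r) : 𝒞.nonMemberSubfamily a = (Iio a).powersetCard r := by
  have hlow := h.powersetCard_subset (by simpa using isLowerSet_Iio a) h₁
  have hup := h.subset_powersetCard (by simpa using isLowerSet_Iic a) h₂
  ext A
  simp only [mem_nonMemberSubfamily, mem_powersetCard]
  refine ⟨fun ⟨hA, haA⟩ => ⟨fun x hx => ?_, h.1 hA⟩,
    fun hA => ⟨hlow (mem_powersetCard.2 hA), fun haA => (mem_Iio.1 (hA.1 haA)).false⟩⟩
  exact mem_Iio.2 ((mem_Iic.1 ((mem_powersetCard.1 (hup hA)).1 hx)).lt_of_ne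
    (fun hxa => haA (hxa ▸ hx)))

theorem IsInitSeg.memberSubfamily_subset (h : IsInitSeg 𝒞 r) (h₂ : #𝒞 ≤ (#(Iic a)).choose r) :
    𝒞.memberSubfamily a ⊆ (Iio a).powersetCard (r - 1) := by
  intro B hB
  obtain ⟨hB𝒞, haB⟩ := mem_memberSubfamily.1 hB
  obtain ⟨hBa, hBr⟩ := mem_powersetCard.1
    (h.subset_powersetCard (by simpa using isLowerSet_Iic a) h₂ hB𝒞)
  refine mem_powersetCard.2 ⟨fun x hx => mem_Iio.2 ?_, ?_⟩
  · exact (mem_Iic.1 (hBa (mem_insert_of_mem hx))).lt_of_ne (fun hxa => haB (hxa ▸ hx))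
  · rw [card_insert_of_notMem haB] at hBr
    omega

end Interval

theorem IsInitSeg.choose_mul_add_le_card_shadow_iterate_mul {n k l : ℕ}
    {𝒞 : Finset (Finset (Fin n))} (h : IsInitSeg 𝒞 l) {a : Fin n} (hk : 1 ≤ k) (hkl : k ≤ l)
    (hla : l ≤ a) (h₁ : (a : ℕ).choose l ≤ #𝒞) (h₂ : #𝒞 ≤ (a + 1 : ℕ).choose l) :
    (a : ℕ).choose k * (a : ℕ).choose (l - 1) + (#𝒞 - (a : ℕ).choose l) * (a : ℕ).choose (k - 1)
      ≤ #(∂^[l - k] 𝒞) * (a : ℕ).choose (l - 1) := by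
  rw [← Fin.card_Iio] at h₁ hla ⊢
  rw [← Fin.card_Iic] at h₂
  have hnon := h.nonMemberSubfamily_eq h₁ h₂
  have hcard : #(𝒞.memberSubfamily a) = #𝒞 - (#(Iio a)).choose l := by
    rw [← card_memberSubfamily_add_card_nonMemberSubfamily a 𝒞, hnon, card_powersetCard,
      Nat.add_sub_cancel]
  have hlym := card_mul_choose_le_card_shadow_iterate_mul (by omega : k - 1 ≤ l - 1)
    (h.memberSubfamily_subset h₂)
  rw [show l - 1 - (k - 1) = l - k by omega] at hlym
  have hshadow := choose_add_card_shadow_iterate_memberSubfamily_le (𝒜 := 𝒞) (a := a)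
    (by simp) hkl hla (hnon ▸ filter_subset _ 𝒞)
  rw [← hcard]
  nlinarith

theorem IsInitSeg.chord_le_card_shadow_iterate {n k l : ℕ} {𝒞 : Finset (Finset (Fin n))}
    (h : IsInitSeg 𝒞 l) (hk : 1 ≤ k) (hkl : k ≤ l) (hln : l + 1 < n) (h₁ : 1 ≤ #𝒞)
    (h₂ : #𝒞 ≤ (n - 1).choose l) :
    ((#𝒞 : ℤ) - 1) * ((n - 1).choose k - l.choose k)
      ≤ (#(∂^[l - k] 𝒞) - l.choose k) * ((n - 1).choose l - 1) := by
  set s := Nat.findGreatest (fun s => s.choose l ≤ #𝒞) (n - 2)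
  have hl : l.choose l ≤ #𝒞 := by rwa [Nat.choose_self]
  have hls : l ≤ s := Nat.le_findGreatest (by omega) hl
  have hsn : s ≤ n - 2 := Nat.findGreatest_le _
  have hs₁ : s.choose l ≤ #𝒞 :=
    Nat.findGreatest_spec (P := fun s => s.choose l ≤ #𝒞) (by omega : l ≤ n - 2) hl
  have hs₂ : #𝒞 ≤ (s + 1).choose l := by
    rcases (by omega : s + 1 ≤ n - 2 ∨ s + 1 = n - 1) with hs | hs
    · exact (not_le.1 (Nat.findGreatest_is_greatest (P := fun s => s.choose l ≤ #𝒞)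
        (Nat.lt_succ_self s) hs)).le
    · rwa [hs]
  have hpascal : (s + 1).choose l = s.choose (l - 1) + s.choose l := by
    obtain ⟨l, rfl⟩ := Nat.exists_eq_add_of_le' (hk.trans hkl)
    exact Nat.choose_succ_succ' s l
  have hloc := h.choose_mul_add_le_card_shadow_iterate_mul (a := ⟨s, by omega⟩) hk hkl hls hs₁ hs₂
  have := choose_chord_of_local_bound (t := n - 1) (e := #𝒞 - s.choose l) (f := #(∂^[l - k] 𝒞))
    hk hkl hls (by omega) (by linarith [(by exact_mod_cast hs₁ : (s.choose l : ℤ) ≤ #𝒞)])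
    (by rw [hpascal] at hs₂; omega) (by exact_mod_cast hloc)
  simpa using this

end Colex

theorem chord_le_card_shadow_iterate {n k l : ℕ} {𝒢 : Finset (Finset (Fin n))}
    (h𝒢 : (𝒢 : Set (Finset (Fin n))).Sized l) (hk : 1 ≤ k) (hkl : k ≤ l) (hln : l + 1 < n)
    (h₁ : 1 ≤ #𝒢) (h₂ : #𝒢 ≤ (n - 1).choose l) :
    ((#𝒢 : ℤ) - 1) * ((n - 1).choose k - l.choose k)
      ≤ (#(∂^[l - k] 𝒢) - l.choose k) * ((n - 1).choose l - 1) := by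
  obtain ⟨𝒞, h𝒞, hcard⟩ := Colex.exists_isInitSeg_card_eq (α := Fin n) (r := l)
    (h₂.trans (by simpa using Nat.choose_le_choose l (n.sub_le 1)))
  have hkk : #(∂^[l - k] 𝒞) ≤ #(∂^[l - k] 𝒢) := iterated_kk h𝒢 hcard.le h𝒞
  have hpos : 0 < (n - 1).choose l := Nat.choose_pos (by omega)
  have := h𝒞.chord_le_card_shadow_iterate hk hkl hln (hcard ▸ h₁) (hcard ▸ h₂)
  rw [hcard] at this
  refine this.trans (mul_le_mul_of_nonneg_right ?_ ?_)
  · linarith [(by exact_mod_cast hkk : (#(∂^[l - k] 𝒞) : ℤ) ≤ #(∂^[l - k] 𝒢))]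
  · linarith [(by exact_mod_cast hpos : (0 : ℤ) < (n - 1).choose l)]

end Finset

theorem card_add_card_shadow_iterate_compls_le {n k : ℕ} {𝒜 ℬ : Finset (Finset (Fin n))}
    (hkn : 2 * k ≤ n) (h𝒜 : (𝒜 : Set (Finset (Fin n))).Sized k)
    (hℬ : (ℬ : Set (Finset (Fin n))).Sized k) (hcross : ∀ A ∈ 𝒜, ∀ B ∈ ℬ, (A ∩ B).Nonempty) :
    #𝒜 + #(∂^[n - 2 * k] ℬᶜˢ) ≤ n.choose k := by
  have hdisj : Disjoint 𝒜 (∂^[n - 2 * k] ℬᶜˢ) := disjoint_right.2 fun A hA hA𝒜 => by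
    obtain ⟨C, hC, hAC, -⟩ := mem_shadow_iterate_iff_exists_sdiff.1 hA
    obtain ⟨x, hx⟩ := hcross A hA𝒜 _ (mem_compls.1 hC)
    exact (mem_compl.1 (mem_inter.1 hx).2) (hAC (mem_inter.1 hx).1)
  have hsized : ((∂^[n - 2 * k] ℬᶜˢ : Finset (Finset (Fin n))) : Set (Finset (Fin n))).Sized k := by
    convert hℬ.compls.shadow_iterate using 1
    simp only [Fintype.card_fin]
    omega
  rw [← card_union_of_disjoint hdisj]
  simpa using Set.Sized.card_le (𝒜 := 𝒜 ∪ _)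
    (by rw [coe_union]; exact Set.sized_union.2 ⟨h𝒜, hsized⟩)

theorem card_le_one_of_crossIntersecting {α : Type*} [DecidableEq α] {k : ℕ}
    {𝒜 ℬ : Finset (Finset α)} (hk : k ≤ 1) (h𝒜 : (𝒜 : Set (Finset α)).Sized k)
    (hℬ : (ℬ : Set (Finset α)).Sized k) (hℬne : ℬ.Nonempty)
    (hcross : ∀ A ∈ 𝒜, ∀ B ∈ ℬ, (A ∩ B).Nonempty) : #𝒜 ≤ 1 := by
  obtain ⟨B, hB⟩ := hℬne
  have hsingle {A : Finset α} {x : α} (hA : #A = k) (hx : x ∈ A) : A = {x} :=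
    eq_singleton_iff_unique_mem.2 ⟨hx, fun y hy => card_le_one.1 (hA.trans_le hk) y hy x hx⟩
  refine card_le_one.2 fun A hA A' hA' => ?_
  obtain ⟨x, hx⟩ := hcross A hA B hB
  obtain ⟨x', hx'⟩ := hcross A' hA' B hB
  rw [mem_inter] at hx hx'
  rw [hsingle (h𝒜 hA) hx.1, hsingle (h𝒜 hA') hx'.1, ← hsingle (hℬ hB) hx.2,
    ← hsingle (hℬ hB) hx'.2]

theorem crossIntersecting_chord {n k : ℕ} {𝒜 ℬ : Finset (Finset (Fin n))} (hk : 2 ≤ k)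
    (hkn : 2 * k ≤ n) (h𝒜 : (𝒜 : Set (Finset (Fin n))).Sized k)
    (hℬ : (ℬ : Set (Finset (Fin n))).Sized k) (hcross : ∀ A ∈ 𝒜, ∀ B ∈ ℬ, (A ∩ B).Nonempty)
    {m : ℕ} (hm₁ : 1 ≤ m) (hmℬ : m ≤ #ℬ) (hmM : m ≤ (n - 1).choose (k - 1)) :
    ((m : ℤ) - 1) * ((n - 1).choose k - (n - k).choose k)
      ≤ (n.choose k - #𝒜 - (n - k).choose k) * ((n - 1).choose (k - 1) - 1) := by
  obtain ⟨ℬ', hℬ'ℬ, rfl⟩ := exists_subset_card_eq hmℬ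
  have hsymm : (n - 1).choose (n - k) = (n - 1).choose (k - 1) :=
    Nat.choose_symm_of_eq_add (by omega)
  have hcompls : (ℬ'ᶜˢ : Set (Finset (Fin n))).Sized (n - k) := by
    simpa using (hℬ.mono (coe_subset.2 hℬ'ℬ)).compls
  have hchord := chord_le_card_shadow_iterate hcompls (by omega : 1 ≤ k) (by omega) (by omega)
    (by rwa [card_compls]) (by rwa [card_compls, hsymm])
  have hcount := card_add_card_shadow_iterate_compls_le hkn h𝒜 (hℬ.mono (coe_subset.2 hℬ'ℬ))
    fun A hA B hB => hcross A hA B (hℬ'ℬ hB)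
  rw [card_compls, hsymm, show n - k - k = n - 2 * k by omega] at hchord
  have hM : (1 : ℤ) ≤ (n - 1).choose (k - 1) := by exact_mod_cast Nat.choose_pos (by omega)
  refine hchord.trans (mul_le_mul_of_nonneg_right ?_ (by linarith))
  linarith [(by exact_mod_cast hcount : (#𝒜 : ℤ) + #(∂^[n - 2 * k] ℬ'ᶜˢ) ≤ n.choose k)]

theorem crossIntersecting_chord_of_lt {n k : ℕ} {𝒜 ℬ : Finset (Finset (Fin n))} (hk : 2 ≤ k)
    (hkn : 2 * k ≤ n) (h𝒜 : (𝒜 : Set (Finset (Fin n))).Sized k)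
    (hℬ : (ℬ : Set (Finset (Fin n))).Sized k) (hcross : ∀ A ∈ 𝒜, ∀ B ∈ ℬ, (A ∩ B).Nonempty)
    (hℬne : ℬ.Nonempty) (h𝒜M : (n - 1).choose (k - 1) < #𝒜) :
    ((#ℬ : ℤ) - 1) * ((n - 1).choose k - (n - k).choose k)
      ≤ (n.choose k - #𝒜 - (n - k).choose k) * ((n - 1).choose (k - 1) - 1) := by
  refine crossIntersecting_chord hk hkn h𝒜 hℬ hcross (card_pos.2 hℬne) le_rfl ?_
  by_contra! hℬM
  have := crossIntersecting_chord hk hkn h𝒜 hℬ hcross (Nat.choose_pos (by omega)) hℬM.le le_rfl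
  have : ((n - 1).choose (k - 1) : ℤ) < #𝒜 := by exact_mod_cast h𝒜M
  have : (n.choose k : ℤ) = (n - 1).choose (k - 1) + (n - 1).choose k := by
    exact_mod_cast Nat.choose_eq_choose_pred_add (by omega) (by omega)
  have : (2 : ℤ) ≤ (n - 1).choose (k - 1) := by
    exact_mod_cast Nat.two_le_choose (by omega) (by omega)
  nlinarith

theorem add_sum_le_max_of_forall_mul_le {ι : Type*} {s : Finset ι} {b : ι → ℤ} {a N L M : ℤ}
    (hs : s.Nonempty) (hM : 1 < M) (hD : 0 < N - M - L) (ha : M ≤ a) (hb : ∀ j ∈ s, 1 ≤ b j)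
    (h : ∀ j ∈ s, (b j - 1) * (N - M - L) ≤ (N - a - L) * (M - 1)) :
    a + ∑ j ∈ s, b j ≤ max (N - L + #s) ((#s + 1) * M) := by
  have hsum : (∑ j ∈ s, b j - #s) * (N - M - L) ≤ #s * (N - a - L) * (M - 1) := by
    have := sum_le_sum h
    rw [← sum_mul, sum_sub_distrib, sum_const, sum_const] at this
    simpa [mul_assoc] using this
  have hsb : (#s : ℤ) ≤ ∑ j ∈ s, b j := by simpa using card_nsmul_le_sum s b 1 hb
  have hc : (0 : ℤ) < #s := by exact_mod_cast hs.card_pos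
  generalize (#s : ℤ) = c at hsum hsb hc ⊢
  generalize ∑ j ∈ s, b j = B at hsum hsb ⊢
  have ht : 0 ≤ N - a - L := by
    by_contra! ht
    nlinarith [mul_pos hc (sub_pos.2 hM), mul_nonneg (sub_nonneg.2 hsb) hD.le]
  rcases le_or_gt (c * (M - 1)) (N - M - L) with hcD | hcD
  · refine le_max_of_le_left ?_
    nlinarith [mul_le_mul_of_nonneg_right hcD ht]
  · refine le_max_of_le_right ?_
    nlinarith [mul_nonneg (sub_nonneg.2 ha) (sub_nonneg.2 hcD.le)]

theorem sum_card_le_of_pairwise_crossIntersecting {n k r : ℕ} (hn : 2 * k ≤ n) (hr : 2 ≤ r)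
    (𝒜 : Fin r → Finset (Finset (Fin n))) (h𝒜 : ∀ i, ((𝒜 i : Set (Finset (Fin n)))).Sized k)
    (hne : ∀ i, (𝒜 i).Nonempty)
    (hcross : ∀ i j, i ≠ j → ∀ A ∈ 𝒜 i, ∀ B ∈ 𝒜 j, (A ∩ B).Nonempty) :
    ∑ i, #(𝒜 i) ≤ max (n.choose k - (n - k).choose k + r - 1) (r * (n - 1).choose (k - 1)) := by
  have : Nontrivial (Fin r) := Fin.nontrivial_iff_two_le.2 hr
  obtain ⟨i₀, -, hmax⟩ := exists_max_image univ (fun i => #(𝒜 i)) univ_nonempty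
  rcases le_or_gt #(𝒜 i₀) ((n - 1).choose (k - 1)) with hsmall | hbig
  · refine le_max_of_le_right ?_
    calc ∑ i, #(𝒜 i) ≤ ∑ _i : Fin r, (n - 1).choose (k - 1) :=
          sum_le_sum fun i _ => (hmax i (mem_univ i)).trans hsmall
      _ = r * (n - 1).choose (k - 1) := by simp
  obtain ⟨j₀, hj₀⟩ := exists_ne i₀
  have hk : 2 ≤ k := by
    by_contra! hk
    have := card_le_one_of_crossIntersecting (by omega) (h𝒜 i₀) (h𝒜 j₀) (hne j₀)
      (hcross i₀ j₀ hj₀.symm)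
    have := Nat.choose_pos (by omega : k - 1 ≤ n - 1)
    omega
  have hL : (n - k).choose k < (n - 1).choose k := by
    have h := Nat.choose_lt_succ_choose (m := n - 2) (by omega : 0 < k) (by omega)
    rw [show n - 2 + 1 = n - 1 by omega] at h
    exact (Nat.choose_le_choose k (by omega)).trans_lt h
  have hpascal := Nat.choose_eq_choose_pred_add (by omega : 0 < n) (by omega : 0 < k)
  have key := add_sum_le_max_of_forall_mul_le (s := univ.erase i₀) (b := fun j => #(𝒜 j))
    (a := #(𝒜 i₀)) (N := n.choose k) (L := (n - k).choose k) (M := (n - 1).choose (k - 1))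
    ⟨j₀, mem_erase.2 ⟨hj₀, mem_univ j₀⟩⟩
    (by exact_mod_cast Nat.two_le_choose (by omega) (by omega))
    (by push_cast [hpascal]; linarith [(by exact_mod_cast hL :
      ((n - k).choose k : ℤ) < (n - 1).choose k)])
    (by exact_mod_cast hbig.le) (fun j _ => by exact_mod_cast card_pos.2 (hne j))
    fun j hj => by
      convert crossIntersecting_chord_of_lt hk hn (h𝒜 i₀) (h𝒜 j)
        (hcross i₀ j (mem_erase.1 hj).1.symm) (hne j) hbig using 3
      push_cast [hpascal]
      ring
  rw [← add_sum_erase _ _ (mem_univ i₀)]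
  zify [(by omega : (n - k).choose k ≤ n.choose k),
    (by omega : 1 ≤ n.choose k - (n - k).choose k + r)]
  simpa [Nat.cast_sub (by omega : 1 ≤ r), ← add_sub_assoc] using key

theorem stmt4 (n k r : ℕ) (hn : 2 * k ≤ n) (hr : 2 ≤ r)
    (𝓕 : Fin r → Finset (Finset ℕ))
    (hsub : ∀ i, 𝓕 i ⊆ (Finset.range n).powersetCard k)
    (hne : ∀ i, (𝓕 i).Nonempty)
    (hcross : ∀ i j, i ≠ j → ∀ A ∈ 𝓕 i, ∀ B ∈ 𝓕 j, (A ∩ B).Nonempty) :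
    ∑ i, (𝓕 i).card ≤
      max (n.choose k - (n - k).choose k + r - 1) (r * (n - 1).choose (k - 1)) := by
  have hrange : (range n).powersetCard k
      = (univ.powersetCard k).map (mapEmbedding (Fin.valEmbedding (n := n))).toEmbedding := by
    rw [← powersetCard_map, Fin.map_valEmbedding_univ, Nat.Iio_eq_range]
  choose 𝒜 h𝒜 h𝓕 using fun i => subset_map_iff.1 (hrange ▸ hsub i)
  simp only [h𝓕, card_map] at hne hcross ⊢
  refine sum_card_le_of_pairwise_crossIntersecting hn hr 𝒜
    (fun i A hA => (mem_powersetCard.1 (h𝒜 i hA)).2) (fun i => map_nonempty.1 (hne i))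
    fun i j hij A hA B hB => ?_
  have := hcross i j hij _ (mem_map_of_mem _ hA) _ (mem_map_of_mem _ hB)
  simpa only [RelEmbedding.coe_toEmbedding, mapEmbedding_apply, ← map_inter, map_nonempty]
    using this
end

section
/- Suppose n ≥ (k−t)(k−t+1) + t, k ≥ t+3, and F ⊆ C([n],k) is a t-intersecting family. Then |F| ≤ (k−t+1)^{τ_t(F)−t} · C(τ_t(F), t) · C(n−τ_t(F), k−τ_t(F)). -/
open Finset

/-!
Branching argument. Write `q = k - t + 1`, `τ = τ_t(𝓕)` and `𝓕(B) = {F ∈ 𝓕 | B ⊆ F}`; we show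
`#𝓕(B) * q ^ #B ≤ C(n - τ, k - τ) * q ^ τ` for every `B ⊆ [n]`.
If `#B ≥ τ`, count all `k`-sets through `B`: the hypothesis on `n` makes `C(n - s, k - s) * q ^ s`
decrease in `s` on `[t, k]`. Otherwise `B` is not a `t`-cover, so some `G ∈ 𝓕` meets `B` in
`t - d < t` points. Every `F ∈ 𝓕(B)` meets `G` in `t` points, hence contains `d` points of `G \ B`,
a set of size `k - t + d`; so `𝓕(B)` is covered by at most `C(k - t + d, d) ≤ q ^ d` families
`𝓕(B ∪ D)` with `#(B ∪ D) = #B + d`, and we recurse.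
Summing the claim over the `t`-subsets of a minimum `t`-cover gives the theorem.
-/

theorem Nat.mul_choose_le_succ_choose_succ {m r q : ℕ} (h : q * (r + 1) ≤ m + 1) :
    q * m.choose r ≤ (m + 1).choose (r + 1) := by
  refine Nat.le_of_mul_le_mul_right (c := r + 1) ?_ r.succ_pos
  calc q * m.choose r * (r + 1) = q * (r + 1) * m.choose r := by ring
    _ ≤ (m + 1) * m.choose r := Nat.mul_le_mul_right _ h
    _ = (m + 1).choose (r + 1) * (r + 1) := Nat.add_one_mul_choose_eq m r

theorem mul_sub_add_le {n k t s : ℕ} (hn : (k - t) * (k - t + 1) + t ≤ n) (hts : t ≤ s)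
    (hsk : s ≤ k) : (k - t + 1) * (k - s) + s ≤ n := by
  obtain ⟨a, rfl⟩ := Nat.exists_eq_add_of_le hts
  obtain ⟨b, rfl⟩ := Nat.exists_eq_add_of_le hsk
  rw [show t + a + b - t = a + b by omega] at hn
  rw [show t + a + b - t = a + b by omega, show t + a + b - (t + a) = b by omega]
  nlinarith

theorem choose_sub_mul_pow_le_of_le {n k t τ s : ℕ} (hn : (k - t) * (k - t + 1) + t ≤ n)
    (htτ : t ≤ τ) (hτs : τ ≤ s) (hsk : s ≤ k) :
    (n - s).choose (k - s) * (k - t + 1) ^ s ≤ (n - τ).choose (k - τ) * (k - t + 1) ^ τ := by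
  induction s, hτs using Nat.le_induction with
  | base => rfl
  | succ s hτs ih =>
    have hroom := mul_sub_add_le hn (htτ.trans hτs) (by omega)
    have hpos : 0 < (k - t + 1) * (k - s) := Nat.mul_pos (by omega) (by omega)
    have hstep : (k - t + 1) * (n - (s + 1)).choose (k - (s + 1)) ≤ (n - s).choose (k - s) := by
      have := Nat.mul_choose_le_succ_choose_succ (q := k - t + 1) (m := n - (s + 1))
        (r := k - (s + 1)) (by rw [show k - (s + 1) + 1 = k - s by omega]; omega)
      rwa [show n - (s + 1) + 1 = n - s by omega, show k - (s + 1) + 1 = k - s by omega] at this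
    calc (n - (s + 1)).choose (k - (s + 1)) * (k - t + 1) ^ (s + 1)
        = (k - t + 1) * (n - (s + 1)).choose (k - (s + 1)) * (k - t + 1) ^ s := by ring
      _ ≤ (n - s).choose (k - s) * (k - t + 1) ^ s := Nat.mul_le_mul_right _ hstep
      _ ≤ _ := ih (by omega)

section Stars

variable {α : Type*} [DecidableEq α]

theorem card_filter_superset_le {𝓕 : Finset (Finset α)} {X B : Finset α} {k : ℕ}
    (h𝓕 : 𝓕 ⊆ X.powersetCard k) (hB : B ⊆ X) :
    #{F ∈ 𝓕 | B ⊆ F} ≤ (#X - #B).choose (k - #B) := by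
  calc #{F ∈ 𝓕 | B ⊆ F} ≤ #((X \ B).powersetCard (k - #B)) := by
        refine card_le_card_of_injOn (· \ B) (fun F hF => ?_) fun F₁ hF₁ F₂ hF₂ h => ?_
        · obtain ⟨hF, hBF⟩ := mem_filter.1 hF
          obtain ⟨hFX, hFk⟩ := mem_powersetCard.1 (h𝓕 hF)
          exact mem_powersetCard.2
            ⟨sdiff_subset_sdiff hFX le_rfl, by rw [card_sdiff_of_subset hBF, hFk]⟩
        · rw [← sdiff_union_of_subset (mem_filter.1 hF₁).2,
            ← sdiff_union_of_subset (mem_filter.1 hF₂).2, show F₁ \ B = F₂ \ B from h]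
    _ = (#X - #B).choose (k - #B) := by rw [card_powersetCard, card_sdiff_of_subset hB]

theorem card_mul_le_choose_mul_of_le_card_inter {𝓕 : Finset (Finset α)} {T : Finset α}
    {s w M : ℕ} (hT : ∀ F ∈ 𝓕, s ≤ #(T ∩ F))
    (hM : ∀ D ∈ T.powersetCard s, #{F ∈ 𝓕 | D ⊆ F} * w ≤ M) :
    #𝓕 * w ≤ (#T).choose s * M := by
  have hcover : 𝓕 ⊆ (T.powersetCard s).biUnion fun D => {F ∈ 𝓕 | D ⊆ F} := by
    intro F hF
    obtain ⟨D, hD, hDs⟩ := exists_subset_card_eq (hT F hF)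
    exact mem_biUnion.2 ⟨D, mem_powersetCard.2 ⟨hD.trans inter_subset_left, hDs⟩,
      mem_filter.2 ⟨hF, hD.trans inter_subset_right⟩⟩
  calc #𝓕 * w ≤ (∑ D ∈ T.powersetCard s, #{F ∈ 𝓕 | D ⊆ F}) * w :=
        Nat.mul_le_mul_right _ ((card_le_card hcover).trans card_biUnion_le)
    _ ≤ ∑ _D ∈ T.powersetCard s, M := by rw [sum_mul]; exact sum_le_sum hM
    _ = (#T).choose s * M := by rw [sum_const, card_powersetCard, smul_eq_mul]

end Stars

theorem card_filter_superset_mul_le {t d w M : ℕ} {𝓕 : Finset (Finset ℕ)}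
    (hint : Intersecting t 𝓕) {B G : Finset ℕ} (hG : G ∈ 𝓕) (hd : #(B ∩ G) + d ≤ t)
    (hM : ∀ D ∈ (G \ B).powersetCard d, #{F ∈ 𝓕 | B ∪ D ⊆ F} * w ≤ M) :
    #{F ∈ 𝓕 | B ⊆ F} * w ≤ (#(G \ B)).choose d * M := by
  refine card_mul_le_choose_mul_of_le_card_inter (fun F hF => ?_) fun D hD => ?_
  · have hsplit : G ∩ F ⊆ (B ∩ G) ∪ ((G \ B) ∩ F) := by
      intro x hx
      by_cases hxB : x ∈ B <;> simp_all
    have := (hint G hG F (mem_filter.1 hF).1).trans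
      ((card_le_card hsplit).trans (card_union_le _ _))
    omega
  · simpa only [filter_filter, union_subset_iff] using hM D hD

theorem tau_le_card {n t : ℕ} {𝓕 : Finset (Finset ℕ)} {S : Finset ℕ} (hS : IsCover n t 𝓕 S) :
    tau n t 𝓕 ≤ #S :=
  Nat.sInf_le ⟨S, hS, rfl⟩

namespace IsCover

variable {n t : ℕ} {𝓕 : Finset (Finset ℕ)} {S : Finset ℕ}

theorem exists_card_eq_tau (hS : IsCover n t 𝓕 S) : ∃ T, IsCover n t 𝓕 T ∧ #T = tau n t 𝓕 :=
  Nat.sInf_mem (s := {m | ∃ S, IsCover n t 𝓕 S ∧ #S = m}) ⟨_, S, hS, rfl⟩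

theorem le_card {F : Finset ℕ} (hS : IsCover n t 𝓕 S) (hF : F ∈ 𝓕) : t ≤ #S :=
  (hS.2 F hF).trans (card_le_card inter_subset_left)

theorem le_tau {F : Finset ℕ} (hS : IsCover n t 𝓕 S) (hF : F ∈ 𝓕) : t ≤ tau n t 𝓕 := by
  obtain ⟨T, hT, hTτ⟩ := hS.exists_card_eq_tau
  exact hTτ ▸ hT.le_card hF

end IsCover

theorem isCover_of_mem {n k t : ℕ} {𝓕 : Finset (Finset ℕ)} (h𝓕 : 𝓕 ⊆ (range n).powersetCard k)
    (hint : Intersecting t 𝓕) {F : Finset ℕ} (hF : F ∈ 𝓕) : IsCover n t 𝓕 F :=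
  ⟨(mem_powersetCard.1 (h𝓕 hF)).1, hint F hF⟩

theorem card_filter_superset_mul_pow_le_of_tau_le {n k t : ℕ} {𝓕 : Finset (Finset ℕ)}
    (hn : (k - t) * (k - t + 1) + t ≤ n) (h𝓕 : 𝓕 ⊆ (range n).powersetCard k)
    (hint : Intersecting t 𝓕) {B : Finset ℕ} (hB : B ⊆ range n) (hτB : tau n t 𝓕 ≤ #B) :
    #{F ∈ 𝓕 | B ⊆ F} * (k - t + 1) ^ #B ≤
      (n - tau n t 𝓕).choose (k - tau n t 𝓕) * (k - t + 1) ^ tau n t 𝓕 := by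
  obtain hempty | ⟨F₀, hF₀⟩ := ({F ∈ 𝓕 | B ⊆ F} : Finset _).eq_empty_or_nonempty
  · simp [hempty]
  obtain ⟨hF₀, hBF₀⟩ := mem_filter.1 hF₀
  have hBk : #B ≤ k := (mem_powersetCard.1 (h𝓕 hF₀)).2 ▸ card_le_card hBF₀
  calc #{F ∈ 𝓕 | B ⊆ F} * (k - t + 1) ^ #B ≤ (n - #B).choose (k - #B) * (k - t + 1) ^ #B :=
        Nat.mul_le_mul_right _ (by simpa using card_filter_superset_le h𝓕 hB)
    _ ≤ _ := choose_sub_mul_pow_le_of_le hn ((isCover_of_mem h𝓕 hint hF₀).le_tau hF₀) hτB hBk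

theorem card_filter_superset_mul_pow_le {n k t : ℕ} {𝓕 : Finset (Finset ℕ)}
    (hn : (k - t) * (k - t + 1) + t ≤ n) (h𝓕 : 𝓕 ⊆ (range n).powersetCard k)
    (hint : Intersecting t 𝓕) {B : Finset ℕ} (hB : B ⊆ range n) :
    #{F ∈ 𝓕 | B ⊆ F} * (k - t + 1) ^ #B ≤
      (n - tau n t 𝓕).choose (k - tau n t 𝓕) * (k - t + 1) ^ tau n t 𝓕 := by
  set τ := tau n t 𝓕
  induction hr : τ - #B using Nat.strong_induction_on generalizing B with
  | _ r ih =>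
  by_cases hτB : τ ≤ #B
  · exact card_filter_superset_mul_pow_le_of_tau_le hn h𝓕 hint hB hτB
  obtain ⟨G, hG, hBG⟩ : ∃ G ∈ 𝓕, #(B ∩ G) < t := by
    by_contra! h
    exact hτB (tau_le_card ⟨hB, h⟩)
  obtain ⟨d, hd⟩ := Nat.exists_eq_add_of_le hBG.le
  obtain ⟨hGn, hGk⟩ := mem_powersetCard.1 (h𝓕 hG)
  have htk : t ≤ k := hGk ▸ (hint G hG G hG).trans (card_le_card inter_subset_left)
  have hGB : #(G \ B) = k - t + d := by
    have := card_sdiff_add_card_inter G B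
    rw [inter_comm] at this
    omega
  refine Nat.le_of_mul_le_mul_right (c := (k - t + 1) ^ d) ?_ (by positivity)
  calc #{F ∈ 𝓕 | B ⊆ F} * (k - t + 1) ^ #B * (k - t + 1) ^ d
      = #{F ∈ 𝓕 | B ⊆ F} * (k - t + 1) ^ (#B + d) := by rw [pow_add, mul_assoc]
    _ ≤ (#(G \ B)).choose d * ((n - τ).choose (k - τ) * (k - t + 1) ^ τ) := by
        refine card_filter_superset_mul_le hint hG hd.ge fun D hD => ?_
        obtain ⟨hDGB, hDd⟩ := mem_powersetCard.1 hD
        have hBD : #(B ∪ D) = #B + d := by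
          rw [card_union_of_disjoint (disjoint_of_subset_right hDGB disjoint_sdiff), hDd]
        rw [← hBD]
        exact ih _ (by omega) (union_subset hB (hDGB.trans (sdiff_subset.trans hGn))) rfl
    _ ≤ (k - t + 1) ^ d * ((n - τ).choose (k - τ) * (k - t + 1) ^ τ) :=
        Nat.mul_le_mul_right _ (hGB ▸ Nat.choose_add_le_add_one_pow _ _)
    _ = _ := mul_comm _ _

theorem stmt6_general (n k t : ℕ)
    (hn : (k - t) * (k - t + 1) + t ≤ n)
    (𝓕 : Finset (Finset ℕ)) (h𝓕 : 𝓕 ⊆ (Finset.range n).powersetCard k)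
    (hint : Intersecting t 𝓕) :
    𝓕.card ≤ (k - t + 1) ^ (tau n t 𝓕 - t) * (tau n t 𝓕).choose t *
      (n - tau n t 𝓕).choose (k - tau n t 𝓕) := by
  obtain rfl | ⟨F₀, hF₀⟩ := 𝓕.eq_empty_or_nonempty
  · simp
  obtain ⟨T, hT, hTτ⟩ := (isCover_of_mem h𝓕 hint hF₀).exists_card_eq_tau
  set τ := tau n t 𝓕
  have hcount : #𝓕 * (k - t + 1) ^ t ≤ (#T).choose t * ((n - τ).choose (k - τ) * (k - t + 1) ^ τ) :=
    card_mul_le_choose_mul_of_le_card_inter hT.2 fun D hD => by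
      obtain ⟨hDT, rfl⟩ := mem_powersetCard.1 hD
      exact card_filter_superset_mul_pow_le hn h𝓕 hint (hDT.trans hT.1)
  have hpow : (k - t + 1) ^ τ = (k - t + 1) ^ (τ - t) * (k - t + 1) ^ t := by
    rw [← pow_add, Nat.sub_add_cancel (hTτ ▸ hT.le_card hF₀)]
  refine Nat.le_of_mul_le_mul_right (c := (k - t + 1) ^ t) ?_ (by positivity)
  calc #𝓕 * (k - t + 1) ^ t ≤ (#T).choose t * ((n - τ).choose (k - τ) * (k - t + 1) ^ τ) := hcount
    _ = _ := by rw [hTτ, hpow]; ring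

theorem stmt6 (n k t : ℕ) (ht : 1 ≤ t) (hk : t + 3 ≤ k)
    (hn : (k - t) * (k - t + 1) + t ≤ n)
    (𝓕 : Finset (Finset ℕ)) (h𝓕 : 𝓕 ⊆ (Finset.range n).powersetCard k)
    (hint : Intersecting t 𝓕) :
    𝓕.card ≤ (k - t + 1) ^ (tau n t 𝓕 - t) * (tau n t 𝓕).choose t *
      (n - tau n t 𝓕).choose (k - tau n t 𝓕) :=
  stmt6_general n k t hn 𝓕 h𝓕 hint
end

section
/- Suppose n ≥ (k−t)(k−t+1) + t, k ≥ t+3, F ⊆ C([n],k) is t-intersecting, and B ⊆ F is a subfamily such that no member of B contains any minimum t-cover of F. Then |B| ≤ (k−t+1)^{τ_t(F)−t+1} · C(τ_t(F), t) · C(n−τ_t(F)−1, k−τ_t(F)−1). -/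
open Finset

/-!
Fix a minimum `t`-cover `T` of size `τ`. Every member of `𝓑` contains a `t`-subset of `T`, so it
suffices to bound, for each set `E`, the weight `(k - t + 1) ^ #E * #{B ∈ 𝓑 | E ⊆ B}` by
`(k - t + 1) ^ (τ + 1) * C(n - τ - 1, k - τ - 1)`. If `#E ≤ τ`, then `E` is not a `t`-cover (it would
be a minimum one, contained in no member of `𝓑`), so some `F ∈ 𝓕` meets `E` in `j < t` points and
every `B ⊇ E` in `𝓑` contains `E` together with `t - j` points of `F \ E`; there are at most
`C(k - j, t - j) ≤ (k - t + 1) ^ (t - j)` choices, so the weight of `E` is at most the largest weight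
of these larger sets. If `#E > τ`, count all `k`-sets containing `E`: the bound on `n` makes
`(k - t + 1) ^ m * C(n - m, k - m)` nonincreasing in `m ≥ t`.
-/

section

variable {α ι : Type*} [DecidableEq α]

theorem Finset.mul_card_le_card_mul_of_forall_exists_subset {𝓑 : Finset (Finset α)}
    {I : Finset ι} (f : ι → Finset α) {a c : ℕ} (h𝓑 : ∀ B ∈ 𝓑, ∃ i ∈ I, f i ⊆ B)
    (hc : ∀ i ∈ I, a * #{B ∈ 𝓑 | f i ⊆ B} ≤ c) : a * #𝓑 ≤ #I * c :=
  calc a * #𝓑 ≤ a * #(I.biUnion fun i => {B ∈ 𝓑 | f i ⊆ B}) := by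
        gcongr
        intro B hB
        obtain ⟨i, hi, hiB⟩ := h𝓑 B hB
        exact mem_biUnion.2 ⟨i, hi, mem_filter.2 ⟨hB, hiB⟩⟩
    _ ≤ a * ∑ i ∈ I, #{B ∈ 𝓑 | f i ⊆ B} := by gcongr; exact card_biUnion_le
    _ = ∑ i ∈ I, a * #{B ∈ 𝓑 | f i ⊆ B} := mul_sum ..
    _ ≤ #I * c := by simpa using sum_le_card_nsmul I _ c hc

theorem Finset.exists_mem_powersetCard_sdiff_union_subset {t : ℕ} {E F B : Finset α}
    (hEB : E ⊆ B) (hBF : t ≤ #(B ∩ F)) :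
    ∃ S ∈ powersetCard (t - #(E ∩ F)) (F \ E), E ∪ S ⊆ B := by
  have hcard : t - #(E ∩ F) ≤ #((B ∩ F) \ E) := by
    have : #(E ∩ (B ∩ F)) ≤ #(E ∩ F) := card_le_card (inter_subset_inter_left inter_subset_right)
    rw [card_sdiff]
    omega
  obtain ⟨S, hS, hSc⟩ := exists_subset_card_eq hcard
  refine ⟨S, mem_powersetCard.2 ⟨hS.trans (sdiff_subset_sdiff inter_subset_right le_rfl), hSc⟩,
    union_subset hEB (hS.trans (sdiff_subset.trans inter_subset_left))⟩

end

theorem Nat.mul_choose_le_choose_succ_succ {q M L : ℕ} (h : q * (L + 1) ≤ M + 1) :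
    q * M.choose L ≤ (M + 1).choose (L + 1) := by
  refine Nat.le_of_mul_le_mul_right ?_ L.succ_pos
  calc q * M.choose L * (L + 1) = q * (L + 1) * M.choose L := by ring
    _ ≤ (M + 1) * M.choose L := by gcongr
    _ = (M + 1).choose (L + 1) * (L + 1) := M.add_one_mul_choose_eq L

theorem Nat.pow_mul_choose_le_choose_add_add {q N K i : ℕ}
    (h : ∀ j < i, q * (K + j + 1) ≤ N + j + 1) :
    q ^ i * N.choose K ≤ (N + i).choose (K + i) := by
  induction i with
  | zero => simp
  | succ i ih =>
    calc q ^ (i + 1) * N.choose K = q * (q ^ i * N.choose K) := by ring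
      _ ≤ q * (N + i).choose (K + i) := by gcongr; exact ih fun j hj => h j (by omega)
      _ ≤ (N + i + 1).choose (K + i + 1) := Nat.mul_choose_le_choose_succ_succ (h i i.lt_succ_self)

section Covers

variable {n k t : ℕ} {𝓕 𝓑 : Finset (Finset ℕ)}

theorem exists_isCover_card_eq_tau (h : ∃ S, IsCover n t 𝓕 S) :
    ∃ S, IsCover n t 𝓕 S ∧ #S = tau n t 𝓕 :=
  let ⟨S, hS⟩ := h
  Nat.sInf_mem (s := {m | ∃ S, IsCover n t 𝓕 S ∧ #S = m}) ⟨_, S, hS, rfl⟩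

theorem mem_minCovers_of_isCover {S : Finset ℕ} (h : IsCover n t 𝓕 S) (hS : #S ≤ tau n t 𝓕) :
    S ∈ minCovers n t 𝓕 :=
  mem_filter.2 ⟨mem_powerset.2 h.1, h.2, le_antisymm hS (Nat.sInf_le ⟨S, h, rfl⟩)⟩

theorem pow_card_mul_card_filter_superset_le_of_le_card
    (h𝓑 : 𝓑 ⊆ powersetCard k (range n)) (hn : (k - t) * (k - t + 1) + t ≤ n)
    {m : ℕ} (htm : t ≤ m) {E : Finset ℕ} (hE : E ⊆ range n) (hmE : m ≤ #E) :
    (k - t + 1) ^ #E * #{B ∈ 𝓑 | E ⊆ B} ≤ (k - t + 1) ^ m * (n - m).choose (k - m) := by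
  obtain hkE | hEk := lt_or_ge k #E
  · have : {B ∈ 𝓑 | E ⊆ B} = ∅ := filter_eq_empty_iff.2 fun B hB hEB =>
      (card_le_card hEB).not_gt ((mem_powersetCard.1 (h𝓑 hB)).2 ▸ hkE)
    simp [this]
  have hcount : #{B ∈ 𝓑 | E ⊆ B} ≤ (n - #E).choose (k - #E) := by
    have := card_filter_powersetCard_subset E (range n) k hE hEk
    rw [card_range] at this
    exact this ▸ card_le_card (filter_subset_filter _ h𝓑)
  have hEn : #E ≤ n := card_range n ▸ card_le_card hE
  -- `C(n - l, k - l) / C(n - l - 1, k - l - 1) = (n - l) / (k - l) ≥ k - t + 1` for `t ≤ l < k`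
  have hstep : ∀ l, t ≤ l → l ≤ k → (k - t + 1) * (k - l) + l ≤ n := by
    intro l htl hlk
    obtain ⟨d, rfl⟩ : ∃ d, l = t + d := ⟨l - t, by omega⟩
    obtain ⟨e, rfl⟩ : ∃ e, k = t + d + e := ⟨k - (t + d), by omega⟩
    rw [show t + d + e - t = d + e by omega, show t + d + e - (t + d) = e by omega] at *
    nlinarith
  have hratio : ∀ j < #E - m, (k - t + 1) * (k - #E + j + 1) ≤ n - #E + j + 1 := by
    intro j hj
    have := hstep (#E - j - 1) (by omega) (by omega)
    rw [show k - (#E - j - 1) = k - #E + j + 1 by omega] at this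
    omega
  have hchain := Nat.pow_mul_choose_le_choose_add_add hratio
  rw [show n - #E + (#E - m) = n - m by omega, show k - #E + (#E - m) = k - m by omega] at hchain
  calc (k - t + 1) ^ #E * #{B ∈ 𝓑 | E ⊆ B}
      ≤ (k - t + 1) ^ m * ((k - t + 1) ^ (#E - m) * (n - #E).choose (k - #E)) := by
        rw [← mul_assoc, ← pow_add, Nat.add_sub_cancel' hmE]
        gcongr
    _ ≤ (k - t + 1) ^ m * (n - m).choose (k - m) := by gcongr

theorem pow_card_mul_card_filter_superset_le
    (h𝓕 : 𝓕 ⊆ powersetCard k (range n)) (h𝓑 : 𝓑 ⊆ powersetCard k (range n))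
    (h𝓑𝓕 : ∀ B ∈ 𝓑, ∀ A ∈ 𝓕, t ≤ #(B ∩ A))
    (hnc : ∀ B ∈ 𝓑, ∀ T ∈ minCovers n t 𝓕, ¬ T ⊆ B)
    (hn : (k - t) * (k - t + 1) + t ≤ n) (htτ : t ≤ tau n t 𝓕)
    {E : Finset ℕ} (hE : E ⊆ range n) :
    (k - t + 1) ^ #E * #{B ∈ 𝓑 | E ⊆ B} ≤
      (k - t + 1) ^ (tau n t 𝓕 + 1) * (n - (tau n t 𝓕 + 1)).choose (k - (tau n t 𝓕 + 1)) := by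
  set τ := tau n t 𝓕
  set q := k - t + 1
  induction hd : τ + 1 - #E using Nat.strong_induction_on generalizing E with
  | _ d ih =>
  obtain hτE | hEτ := le_or_gt (τ + 1) #E
  · exact pow_card_mul_card_filter_superset_le_of_le_card h𝓑 hn (by omega) hE hτE
  by_cases hcov : IsCover n t 𝓕 E
  · have : {B ∈ 𝓑 | E ⊆ B} = ∅ := filter_eq_empty_iff.2 fun B hB =>
      hnc B hB E (mem_minCovers_of_isCover hcov (by omega))
    simp [this]
  obtain ⟨F, hF, hEF⟩ : ∃ F ∈ 𝓕, #(E ∩ F) < t := by simpa [IsCover, hE] using hcov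
  obtain ⟨hFn, hFk⟩ := mem_powersetCard.1 (h𝓕 hF)
  set b := t - #(E ∩ F) with hb
  set D := q ^ (τ + 1) * (n - (τ + 1)).choose (k - (τ + 1))
  have hchoices : #(powersetCard b (F \ E)) ≤ q ^ b := by
    have : #(E ∩ F) ≤ #F := card_le_card inter_subset_right
    rw [card_powersetCard, card_sdiff, hFk]
    exact (Nat.choose_le_sub_pow _ _).trans (Nat.pow_le_pow_left (by omega) _)
  have hsplit : q ^ (#E + b) * #{B ∈ 𝓑 | E ⊆ B} ≤ #(powersetCard b (F \ E)) * D := by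
    refine mul_card_le_card_mul_of_forall_exists_subset (E ∪ ·) (fun B hB => ?_) (fun S hS => ?_)
    · obtain ⟨hB, hEB⟩ := mem_filter.1 hB
      exact exists_mem_powersetCard_sdiff_union_subset hEB (h𝓑𝓕 B hB F hF)
    · obtain ⟨hSF, hSb⟩ := mem_powersetCard.1 hS
      have hES : #(E ∪ S) = #E + b := by
        rw [card_union_of_disjoint (disjoint_sdiff.mono_right hSF), hSb]
      calc q ^ (#E + b) * #{B ∈ {B ∈ 𝓑 | E ⊆ B} | E ∪ S ⊆ B}
          ≤ q ^ #(E ∪ S) * #{B ∈ 𝓑 | E ∪ S ⊆ B} := by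
            rw [hES]
            gcongr
            exact filter_subset _ _
        _ ≤ D := ih _ (by omega) (union_subset hE (hSF.trans (sdiff_subset.trans hFn))) rfl
  refine Nat.le_of_mul_le_mul_left ?_ (pow_pos (by omega : 0 < q) b)
  calc q ^ b * (q ^ #E * #{B ∈ 𝓑 | E ⊆ B}) = q ^ (#E + b) * #{B ∈ 𝓑 | E ⊆ B} := by ring
    _ ≤ #(powersetCard b (F \ E)) * D := hsplit
    _ ≤ q ^ b * D := by gcongr

end Covers

theorem stmt7_general (n k t : ℕ)
    (hn : (k - t) * (k - t + 1) + t ≤ n)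
    (𝓕 𝓑 : Finset (Finset ℕ)) (h𝓕 : 𝓕 ⊆ (Finset.range n).powersetCard k)
    (hint : Intersecting t 𝓕) (h𝓑 : 𝓑 ⊆ 𝓕)
    (hnc : ∀ B ∈ 𝓑, ∀ T ∈ minCovers n t 𝓕, ¬ T ⊆ B) :
    𝓑.card ≤ (k - t + 1) ^ (tau n t 𝓕 - t + 1) * (tau n t 𝓕).choose t *
      (n - tau n t 𝓕 - 1).choose (k - tau n t 𝓕 - 1) := by
  obtain rfl | ⟨B₀, hB₀⟩ := 𝓑.eq_empty_or_nonempty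
  · simp
  have h𝓑𝓕 : ∀ B ∈ 𝓑, ∀ A ∈ 𝓕, t ≤ #(B ∩ A) := fun B hB => hint B (h𝓑 hB)
  obtain ⟨T, hT, hTτ⟩ := exists_isCover_card_eq_tau
    ⟨B₀, (mem_powersetCard.1 (h𝓕 (h𝓑 hB₀))).1, h𝓑𝓕 B₀ hB₀⟩
  set τ := tau n t 𝓕
  set q := k - t + 1
  have htτ : t ≤ τ := hTτ ▸ (hT.2 B₀ (h𝓑 hB₀)).trans (card_le_card inter_subset_left)
  have hsplit : q ^ t * #𝓑 ≤ #(powersetCard t T) *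
      (q ^ (τ + 1) * (n - (τ + 1)).choose (k - (τ + 1))) := by
    refine mul_card_le_card_mul_of_forall_exists_subset id (fun B hB => ?_) (fun E hE => ?_)
    · obtain ⟨E, hE, hEt⟩ := exists_subset_card_eq (hT.2 B (h𝓑 hB))
      exact ⟨E, mem_powersetCard.2 ⟨hE.trans inter_subset_left, hEt⟩, hE.trans inter_subset_right⟩
    · obtain ⟨hET, hEt⟩ := mem_powersetCard.1 hE
      exact hEt ▸ pow_card_mul_card_filter_superset_le h𝓕 (h𝓑.trans h𝓕) h𝓑𝓕 hnc hn htτ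
        (hET.trans hT.1)
  have hq : q ^ (τ + 1) = q ^ t * q ^ (τ - t + 1) := by rw [← pow_add]; congr 1; omega
  rw [card_powersetCard, hTτ, hq] at hsplit
  rw [Nat.sub_sub, Nat.sub_sub]
  refine Nat.le_of_mul_le_mul_left ?_ (pow_pos (by omega : 0 < q) t)
  calc q ^ t * #𝓑 ≤ τ.choose t * (q ^ t * q ^ (τ - t + 1) * (n - (τ + 1)).choose (k - (τ + 1))) :=
        hsplit
    _ = q ^ t * (q ^ (τ - t + 1) * τ.choose t * (n - (τ + 1)).choose (k - (τ + 1))) := by ring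

theorem stmt7 (n k t : ℕ) (ht : 1 ≤ t) (hk : t + 3 ≤ k)
    (hn : (k - t) * (k - t + 1) + t ≤ n)
    (𝓕 𝓑 : Finset (Finset ℕ)) (h𝓕 : 𝓕 ⊆ (Finset.range n).powersetCard k)
    (hint : Intersecting t 𝓕) (h𝓑 : 𝓑 ⊆ 𝓕)
    (hnc : ∀ B ∈ 𝓑, ∀ T ∈ minCovers n t 𝓕, ¬ T ⊆ B) :
    𝓑.card ≤ (k - t + 1) ^ (tau n t 𝓕 - t + 1) * (tau n t 𝓕).choose t *
      (n - tau n t 𝓕 - 1).choose (k - tau n t 𝓕 - 1) :=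
  stmt7_general n k t hn 𝓕 𝓑 h𝓕 hint h𝓑 hnc
end

section
/- Let n > 2k, k ≥ t+3, T, A ∈ C([n],t), B, C ∈ C([n],k−t) with |T ∩ A| = t−1, T ∩ (B ∪ C) = ∅, and A, B, C pairwise disjoint, and let u ∈ C. Then the family F = {F ∈ C([n],k) : F ∩ (A ∪ T) = T, F ∩ B ≠ ∅, F ∩ C ≠ ∅} ∪ {F ∈ C([n],k) : A ∪ T ⊆ F, F ∩ (B ∪ {u}) ≠ ∅} ∪ {A ∪ B, A ∪ C, (T ∩ A) ∪ B ∪ {u}} is t-intersecting. -/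
open Finset

theorem stmt8 (n k t : ℕ) (ht : 1 ≤ t) (hk : t + 3 ≤ k) (hn : 2 * k < n)
    (T A B C : Finset ℕ) (u : ℕ)
    (hT : T ∈ (Finset.range n).powersetCard t)
    (hA : A ∈ (Finset.range n).powersetCard t)
    (hB : B ∈ (Finset.range n).powersetCard (k - t))
    (hC : C ∈ (Finset.range n).powersetCard (k - t))
    (hTA : (T ∩ A).card = t - 1) (hTBC : T ∩ (B ∪ C) = ∅)
    (hAB : Disjoint A B) (hAC : Disjoint A C) (hBC : Disjoint B C)
    (hu : u ∈ C) :
    Intersecting t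
      ((((Finset.range n).powersetCard k).filter
        (fun F => (F ∩ (A ∪ T) = T ∧ (F ∩ B).Nonempty ∧ (F ∩ C).Nonempty) ∨
          (A ∪ T ⊆ F ∧ (F ∩ (insert u B)).Nonempty))) ∪
        {A ∪ B, A ∪ C, (T ∩ A) ∪ B ∪ {u}}) := by
  classical
  simp only [mem_powersetCard] at hA hB hC hT
  obtain ⟨hTr, hTcard⟩ := hT
  obtain ⟨hAr, hAcard⟩ := hA
  obtain ⟨hBr, hBcard⟩ := hB
  obtain ⟨hCr, hCcard⟩ := hC
  have hBne : B.Nonempty := card_pos.mp (by omega)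
  have huA : u ∉ A := disjoint_right.mp hAC hu
  have hBA : ∀ x ∈ B, x ∉ A := fun x hx => disjoint_right.mp hAB hx
  have hCA : ∀ x ∈ C, x ∉ A := fun x hx => disjoint_right.mp hAC hx
  have key1 : ∀ X Y : Finset ℕ, T ∩ A ⊆ X → T ∩ A ⊆ Y →
      ∀ x, x ∈ X → x ∈ Y → x ∉ A → t ≤ (X ∩ Y).card := by
    intro X Y h1 h2 x hx hy hxA
    have hsub : insert x (T ∩ A) ⊆ X ∩ Y := by
      intro z hz
      rcases mem_insert.mp hz with rfl | hz
      · exact mem_inter.mpr ⟨hx, hy⟩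
      · exact mem_inter.mpr ⟨h1 hz, h2 hz⟩
    have hle := card_le_card hsub
    rw [card_insert_of_notMem (fun h => hxA (mem_of_mem_inter_right h)), hTA] at hle
    omega
  have keyS : ∀ (S X Y : Finset ℕ), S.card = t → S ⊆ X → S ⊆ Y → t ≤ (X ∩ Y).card := by
    intro S X Y hc h1 h2
    calc t = S.card := hc.symm
      _ ≤ _ := card_le_card (subset_inter h1 h2)
  intro X hX Y hY
  have classify : ∀ Z, Z ∈ ((((Finset.range n).powersetCard k).filter
        (fun F => (F ∩ (A ∪ T) = T ∧ (F ∩ B).Nonempty ∧ (F ∩ C).Nonempty) ∨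
          (A ∪ T ⊆ F ∧ (F ∩ (insert u B)).Nonempty))) ∪
        {A ∪ B, A ∪ C, (T ∩ A) ∪ B ∪ {u}}) →
      (T ⊆ Z ∧ (Z ∩ B).Nonempty ∧ (Z ∩ C).Nonempty)
      ∨ (T ⊆ Z ∧ A ⊆ Z ∧ (Z ∩ insert u B).Nonempty)
      ∨ Z = A ∪ B ∨ Z = A ∪ C ∨ Z = (T ∩ A) ∪ B ∪ {u} := by
    intro Z hZ
    rw [mem_union, mem_filter] at hZ
    rcases hZ with ⟨-, h⟩ | h
    · rcases h with ⟨h1, h2, h3⟩ | ⟨h1, h2⟩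
      · exact Or.inl ⟨by rw [← h1]; exact inter_subset_left, h2, h3⟩
      · exact Or.inr (Or.inl ⟨(union_subset_iff.mp h1).2, (union_subset_iff.mp h1).1, h2⟩)
    · simp only [mem_insert, mem_singleton] at h
      tauto
  have cX := classify X hX
  have cY := classify Y hY
  have hTAX : T ∩ A ⊆ X := by
    rcases cX with ⟨h, -⟩ | ⟨h, -⟩ | rfl | rfl | rfl
    · exact inter_subset_left.trans h
    · exact inter_subset_left.trans h
    · exact inter_subset_right.trans subset_union_left
    · exact inter_subset_right.trans subset_union_left
    · exact subset_union_left.trans subset_union_left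
  have hTAY : T ∩ A ⊆ Y := by
    rcases cY with ⟨h, -⟩ | ⟨h, -⟩ | rfl | rfl | rfl
    · exact inter_subset_left.trans h
    · exact inter_subset_left.trans h
    · exact inter_subset_right.trans subset_union_left
    · exact inter_subset_right.trans subset_union_left
    · exact subset_union_left.trans subset_union_left
  rcases cX with ⟨hXT, hXB, hXC⟩ | ⟨hXT, hXA, hXuB⟩ | rfl | rfl | rfl <;>
    rcases cY with ⟨hYT, hYB, hYC⟩ | ⟨hYT, hYA, hYuB⟩ | rfl | rfl | rfl
  -- X class 1
  · exact keyS T X Y hTcard hXT hYT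
  · exact keyS T X Y hTcard hXT hYT
  · obtain ⟨x, hx⟩ := hXB
    exact key1 _ _ hTAX hTAY x (mem_of_mem_inter_left hx)
      (mem_union_right _ (mem_of_mem_inter_right hx)) (hBA x (mem_of_mem_inter_right hx))
  · obtain ⟨x, hx⟩ := hXC
    exact key1 _ _ hTAX hTAY x (mem_of_mem_inter_left hx)
      (mem_union_right _ (mem_of_mem_inter_right hx)) (hCA x (mem_of_mem_inter_right hx))
  · obtain ⟨x, hx⟩ := hXB
    exact key1 _ _ hTAX hTAY x (mem_of_mem_inter_left hx)
      (mem_union_left _ (mem_union_right _ (mem_of_mem_inter_right hx)))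
      (hBA x (mem_of_mem_inter_right hx))
  -- X class 2
  · exact keyS T X Y hTcard hXT hYT
  · exact keyS T X Y hTcard hXT hYT
  · exact keyS A X _ hAcard hXA subset_union_left
  · exact keyS A X _ hAcard hXA subset_union_left
  · obtain ⟨x, hx⟩ := hXuB
    have hx1 := mem_of_mem_inter_left hx
    rcases mem_insert.mp (mem_of_mem_inter_right hx) with rfl | hxB
    · exact key1 _ _ hTAX hTAY x hx1 (mem_union_right _ (mem_singleton_self x)) huA
    · exact key1 _ _ hTAX hTAY x hx1 (mem_union_left _ (mem_union_right _ hxB)) (hBA x hxB)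
  -- X = A ∪ B
  · obtain ⟨x, hx⟩ := hYB
    rw [inter_comm]
    exact key1 _ _ hTAY hTAX x (mem_of_mem_inter_left hx)
      (mem_union_right _ (mem_of_mem_inter_right hx)) (hBA x (mem_of_mem_inter_right hx))
  · exact keyS A _ Y hAcard subset_union_left hYA
  · exact keyS A _ _ hAcard subset_union_left subset_union_left
  · exact keyS A _ _ hAcard subset_union_left subset_union_left
  · obtain ⟨x, hx⟩ := hBne
    exact key1 _ _ hTAX hTAY x (mem_union_right _ hx)
      (mem_union_left _ (mem_union_right _ hx)) (hBA x hx)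
  -- X = A ∪ C
  · obtain ⟨x, hx⟩ := hYC
    rw [inter_comm]
    exact key1 _ _ hTAY hTAX x (mem_of_mem_inter_left hx)
      (mem_union_right _ (mem_of_mem_inter_right hx)) (hCA x (mem_of_mem_inter_right hx))
  · exact keyS A _ Y hAcard subset_union_left hYA
  · exact keyS A _ _ hAcard subset_union_left subset_union_left
  · exact keyS A _ _ hAcard subset_union_left subset_union_left
  · exact key1 _ _ hTAX hTAY u (mem_union_right _ hu)
      (mem_union_right _ (mem_singleton_self u)) huA
  -- X = (T ∩ A) ∪ B ∪ {u}
  · obtain ⟨x, hx⟩ := hYB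
    rw [inter_comm]
    exact key1 _ _ hTAY hTAX x (mem_of_mem_inter_left hx)
      (mem_union_left _ (mem_union_right _ (mem_of_mem_inter_right hx)))
      (hBA x (mem_of_mem_inter_right hx))
  · obtain ⟨x, hx⟩ := hYuB
    have hx1 := mem_of_mem_inter_left hx
    rw [inter_comm]
    rcases mem_insert.mp (mem_of_mem_inter_right hx) with rfl | hxB
    · exact key1 _ _ hTAY hTAX x hx1 (mem_union_right _ (mem_singleton_self x)) huA
    · exact key1 _ _ hTAY hTAX x hx1 (mem_union_left _ (mem_union_right _ hxB)) (hBA x hxB)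
  · obtain ⟨x, hx⟩ := hBne
    exact key1 _ _ hTAX hTAY x (mem_union_left _ (mem_union_right _ hx))
      (mem_union_right _ hx) (hBA x hx)
  · exact key1 _ _ hTAX hTAY u (mem_union_right _ (mem_singleton_self u))
      (mem_union_right _ hu) huA
  · exact key1 _ _ hTAX hTAY u (mem_union_right _ (mem_singleton_self u))
      (mem_union_right _ (mem_singleton_self u)) huA
end

section
/- Let n > 2k, k ≥ t+3, M ∈ C([n],k+2) and W ∈ C(M,t+2). Then the family F = {F ∈ C([n],k) : W ⊆ F} ∪ {F ∈ C([n],k) : |F ∩ W| = t+1 and F ∩ (M \ W) ≠ ∅} ∪ {F ∈ C(M,k) : |F ∩ W| = t} is t-intersecting, and its size equals C(n−t−2, k−t−2) + (t+2)(C(n−t−2, k−t−1) − C(n−k−2, k−t−1)) + C(t+2, 2). -/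
open Finset

lemma trace_count (s W S : Finset ℕ) (k : ℕ) (hW : W ⊆ s) (hS : S ⊆ W) (hk : S.card ≤ k) :
    ((s.powersetCard k).filter (fun F => F ∩ W = S)).card
      = ((s \ W).card).choose (k - S.card) := by
  classical
  rw [← card_powersetCard]
  apply card_bij' (fun F _ => F \ W) (fun G _ => G ∪ S)
  · intro F hF
    simp only [mem_filter, mem_powersetCard] at hF
    obtain ⟨⟨hFs, hFk⟩, hFW⟩ := hF
    rw [mem_powersetCard]
    constructor
    · exact sdiff_subset_sdiff hFs (le_refl W)
    · have := card_sdiff_add_card_inter F W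
      rw [hFW] at this
      omega
  · intro G hG
    rw [mem_powersetCard] at hG
    obtain ⟨hGs, hGk⟩ := hG
    have hGW : Disjoint G W := (subset_sdiff.mp hGs).2
    simp only [mem_filter, mem_powersetCard]
    refine ⟨⟨union_subset ((subset_sdiff.mp hGs).1) (hS.trans hW), ?_⟩, ?_⟩
    · rw [card_union_of_disjoint (hGW.mono_right hS)]
      omega
    · rw [union_inter_distrib_right, inter_eq_left.mpr hS,
        disjoint_iff_inter_eq_empty.mp hGW, empty_union]
  · intro F hF
    simp only [mem_filter, mem_powersetCard] at hF
    rw [← hF.2, sdiff_union_inter]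
  · intro G hG
    rw [mem_powersetCard] at hG
    have hGW : Disjoint G W := (subset_sdiff.mp hG.1).2
    rw [union_sdiff_distrib, sdiff_eq_empty_iff_subset.mpr hS,
      sdiff_eq_self_of_disjoint hGW, union_empty]

theorem stmt9 (n k t : ℕ) (ht : 1 ≤ t) (hk : t + 3 ≤ k) (hn : 2 * k < n)
    (M W : Finset ℕ) (hM : M ∈ (Finset.range n).powersetCard (k + 2))
    (hW : W ∈ M.powersetCard (t + 2))
    (𝓕 : Finset (Finset ℕ))
    (h𝓕 : 𝓕 = ((Finset.range n).powersetCard k).filter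
      (fun F => W ⊆ F ∨ ((F ∩ W).card = t + 1 ∧ (F ∩ (M \ W)).Nonempty) ∨
        (F ⊆ M ∧ (F ∩ W).card = t))) :
    Intersecting t 𝓕 ∧
    𝓕.card = (n - t - 2).choose (k - t - 2) +
      (t + 2) * ((n - t - 2).choose (k - t - 1) - (n - k - 2).choose (k - t - 1)) +
      (t + 2).choose 2 := by
  classical
  subst h𝓕
  rw [mem_powersetCard] at hM hW
  obtain ⟨hMn, hMc⟩ := hM
  obtain ⟨hWM, hWc⟩ := hW
  have hWn : W ⊆ range n := hWM.trans hMn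
  have hDc : (M \ W).card = k - t := by rw [card_sdiff_of_subset hWM]; omega
  -- key inequality
  have key : ∀ F G : Finset ℕ,
      (F ∩ W).card + (G ∩ W).card ≤ ((F ∩ W) ∩ (G ∩ W)).card + (t + 2) := by
    intro F G
    have h1 := card_inter_add_card_union (F ∩ W) (G ∩ W)
    have h2 : ((F ∩ W) ∪ (G ∩ W)).card ≤ t + 2 := by
      rw [← hWc]
      exact card_le_card (union_subset inter_subset_right inter_subset_right)
    omega
  have keysub : ∀ F G : Finset ℕ, (F ∩ W) ∩ (G ∩ W) ⊆ F ∩ G := fun F G =>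
    inter_subset_inter inter_subset_left inter_subset_left
  -- C-case fact
  have cfact : ∀ F : Finset ℕ, F ⊆ M → F.card = k → (F ∩ W).card = t → M \ W ⊆ F := by
    intro F hFM hFk hFW
    have h1 : F \ W ⊆ M \ W := sdiff_subset_sdiff hFM (le_refl W)
    have h2 := card_sdiff_add_card_inter F W
    have h3 : (M \ W).card ≤ (F \ W).card := by omega
    rw [← eq_of_subset_of_card_le h1 h3]
    exact sdiff_subset
  constructor
  · intro A hA B hB
    simp only [mem_filter, mem_powersetCard] at hA hB
    obtain ⟨⟨hAn, hAk⟩, hA⟩ := hA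
    obtain ⟨⟨hBn, hBk⟩, hB⟩ := hB
    rcases hA with hA1 | ⟨hA2, hA2'⟩ | ⟨hA3, hA3'⟩ <;>
      rcases hB with hB1 | ⟨hB2, hB2'⟩ | ⟨hB3, hB3'⟩
    · -- A,A
      have : W ⊆ A ∩ B := subset_inter hA1 hB1
      have := card_le_card this; omega
    · -- A,B
      have h : B ∩ W ⊆ A ∩ B := subset_inter (inter_subset_right.trans hA1) inter_subset_left
      have := card_le_card h; omega
    · -- A,C
      have h : B ∩ W ⊆ A ∩ B := subset_inter (inter_subset_right.trans hA1) inter_subset_left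
      have := card_le_card h; omega
    · -- B,A
      have h : A ∩ W ⊆ A ∩ B := subset_inter inter_subset_left (inter_subset_right.trans hB1)
      have := card_le_card h; omega
    · -- B,B
      have h1 := key A B
      have h2 := card_le_card (keysub A B)
      have h3 : (0:ℕ) = 0 := rfl
      -- just combine
      have h4 := card_le_card ((keysub A B).trans inter_subset_left)
      omega
    · -- B,C
      have hMWB : M \ W ⊆ B := cfact B hB3 hBk hB3'
      obtain ⟨x, hx⟩ := hA2'
      rw [mem_inter, mem_sdiff] at hx
      have hxAB : x ∈ A ∩ B := mem_inter.mpr ⟨hx.1, hMWB (mem_sdiff.mpr hx.2)⟩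
      have hxW : x ∉ (A ∩ W) ∩ (B ∩ W) := by
        simp only [mem_inter]
        intro h; exact hx.2.2 h.1.2
      have hins : insert x ((A ∩ W) ∩ (B ∩ W)) ⊆ A ∩ B :=
        insert_subset hxAB (keysub A B)
      have h1 := card_le_card hins
      rw [card_insert_of_notMem hxW] at h1
      have h2 := key A B
      omega
    · -- C,A
      have h : A ∩ W ⊆ A ∩ B := subset_inter inter_subset_left (inter_subset_right.trans hB1)
      have := card_le_card h; omega
    · -- C,B
      have hMWA : M \ W ⊆ A := cfact A hA3 hAk hA3'
      obtain ⟨x, hx⟩ := hB2'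
      rw [mem_inter, mem_sdiff] at hx
      have hxAB : x ∈ A ∩ B := mem_inter.mpr ⟨hMWA (mem_sdiff.mpr hx.2), hx.1⟩
      have hxW : x ∉ (A ∩ W) ∩ (B ∩ W) := by
        simp only [mem_inter]
        intro h; exact hx.2.2 h.1.2
      have hins : insert x ((A ∩ W) ∩ (B ∩ W)) ⊆ A ∩ B :=
        insert_subset hxAB (keysub A B)
      have h1 := card_le_card hins
      rw [card_insert_of_notMem hxW] at h1
      have h2 := key A B
      omega
    · -- C,C
      have hMWA : M \ W ⊆ A := cfact A hA3 hAk hA3'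
      have hMWB : M \ W ⊆ B := cfact B hB3 hBk hB3'
      have hsub : (M \ W) ∪ ((A ∩ W) ∩ (B ∩ W)) ⊆ A ∩ B :=
        union_subset (subset_inter hMWA hMWB) (keysub A B)
      have hdisj : Disjoint (M \ W) ((A ∩ W) ∩ (B ∩ W)) :=
        sdiff_disjoint.mono_right (inter_subset_left.trans inter_subset_right)
      have h1 := card_le_card hsub
      rw [card_union_of_disjoint hdisj] at h1
      have h2 := key A B
      omega
  · -- cardinality
    have hrc : (range n).card = n := card_range n
    have hrW : ((range n) \ W).card = n - (t + 2) := by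
      rw [card_sdiff_of_subset hWn, hrc, hWc]
    set P := (range n).powersetCard k with hP
    have cW : ∀ F : Finset ℕ, W ⊆ F → (F ∩ W).card = t + 2 := fun F h => by
      rw [inter_eq_right.mpr h, hWc]
    have hd2 : Disjoint (P.filter (fun F => (F ∩ W).card = t + 1 ∧ (F ∩ (M \ W)).Nonempty))
        (P.filter (fun F => F ⊆ M ∧ (F ∩ W).card = t)) := by
      rw [disjoint_left]
      intro F h1 h2
      rw [mem_filter] at h1 h2
      omega
    have hd1 : Disjoint (P.filter (fun F => W ⊆ F))
        (P.filter (fun F => (F ∩ W).card = t + 1 ∧ (F ∩ (M \ W)).Nonempty) ∪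
         P.filter (fun F => F ⊆ M ∧ (F ∩ W).card = t)) := by
      rw [disjoint_left]
      intro F h1 h2
      rw [mem_filter] at h1
      have hc := cW F h1.2
      rcases mem_union.mp h2 with h | h <;> rw [mem_filter] at h <;> omega
    have c1 : (P.filter (fun F => W ⊆ F)).card = (n - t - 2).choose (k - t - 2) := by
      have he : P.filter (fun F => W ⊆ F) = P.filter (fun F => F ∩ W = W) :=
        filter_congr fun F _ => by rw [inter_eq_right]
      rw [he, hP, trace_count (range n) W W k hWn Subset.rfl (by rw [hWc]; omega), hrW, hWc]
      congr 1 <;> omega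
    have c3 : (P.filter (fun F => F ⊆ M ∧ (F ∩ W).card = t)).card = (t + 2).choose 2 := by
      have he : P.filter (fun F => F ⊆ M ∧ (F ∩ W).card = t)
          = (M.powersetCard k).filter (fun F => (F ∩ W).card = t) := by
        ext F
        simp only [hP, mem_filter, mem_powersetCard]
        constructor
        · rintro ⟨⟨-, h2⟩, h3, h4⟩; exact ⟨⟨h3, h2⟩, h4⟩
        · rintro ⟨⟨h1, h2⟩, h3⟩; exact ⟨⟨h1.trans hMn, h2⟩, h1, h3⟩
      have hmem : ∀ F ∈ (M.powersetCard k).filter (fun F => (F ∩ W).card = t),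
          F ∩ W ∈ W.powersetCard t := by
        intro F hF
        exact mem_powersetCard.mpr ⟨inter_subset_right, (mem_filter.mp hF).2⟩
      rw [he, card_eq_sum_card_fiberwise hmem]
      have hone : ∀ S ∈ W.powersetCard t,
          (((M.powersetCard k).filter (fun F => (F ∩ W).card = t)).filter
            (fun F => F ∩ W = S)).card = 1 := by
        intro S hS
        rw [mem_powersetCard] at hS
        rw [filter_filter]
        have he2 : (M.powersetCard k).filter (fun F => (F ∩ W).card = t ∧ F ∩ W = S)
            = (M.powersetCard k).filter (fun F => F ∩ W = S) :=
          filter_congr fun F _ => ⟨fun h => h.2, fun h => ⟨by rw [h, hS.2], h⟩⟩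
        rw [he2, trace_count M W S k hWM hS.1 (le_trans (le_of_eq hS.2) (by omega)),
          hS.2, hDc]
        exact Nat.choose_self _
      rw [sum_congr rfl hone, sum_const, smul_eq_mul, mul_one, card_powersetCard, hWc]
      conv_lhs => rw [show t = t + 2 - 2 by omega]
      exact Nat.choose_symm (by omega)
    have c2 : (P.filter (fun F => (F ∩ W).card = t + 1 ∧ (F ∩ (M \ W)).Nonempty)).card
        = (t + 2) * ((n - t - 2).choose (k - t - 1) - (n - k - 2).choose (k - t - 1)) := by
      have hmem : ∀ F ∈ P.filter (fun F => (F ∩ W).card = t + 1 ∧ (F ∩ (M \ W)).Nonempty),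
          F ∩ W ∈ W.powersetCard (t + 1) := by
        intro F hF
        exact mem_powersetCard.mpr ⟨inter_subset_right, (mem_filter.mp hF).2.1⟩
      rw [card_eq_sum_card_fiberwise hmem]
      have hfib : ∀ S ∈ W.powersetCard (t + 1),
          ((P.filter (fun F => (F ∩ W).card = t + 1 ∧ (F ∩ (M \ W)).Nonempty)).filter
            (fun F => F ∩ W = S)).card
          = (n - t - 2).choose (k - t - 1) - (n - k - 2).choose (k - t - 1) := by
        intro S hS
        rw [mem_powersetCard] at hS
        have e1 : (P.filter (fun F => (F ∩ W).card = t + 1 ∧ (F ∩ (M \ W)).Nonempty)).filter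
              (fun F => F ∩ W = S)
            = (P.filter (fun F => F ∩ W = S)).filter (fun F => (F ∩ (M \ W)).Nonempty) := by
          rw [filter_filter, filter_filter]
          exact filter_congr fun F _ =>
            ⟨fun h => ⟨h.2, h.1.2⟩, fun h => ⟨⟨by rw [h.1, hS.2], h.2⟩, h.1⟩⟩
        rw [e1]
        have hsplit := card_filter_add_card_filter_not
          (s := P.filter (fun F => F ∩ W = S)) (p := fun F => (F ∩ (M \ W)).Nonempty)
        have hempty : (P.filter (fun F => F ∩ W = S)).filter
              (fun F => ¬ (F ∩ (M \ W)).Nonempty)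
            = ((range n \ (M \ W)).powersetCard k).filter (fun F => F ∩ W = S) := by
          ext F
          simp only [hP, mem_filter, mem_powersetCard, not_nonempty_iff_eq_empty,
            subset_sdiff, ← disjoint_iff_inter_eq_empty]
          tauto
        have hX := trace_count (range n) W S k hWn hS.1
          (le_trans (le_of_eq hS.2) (by omega))
        have hY := trace_count (range n \ (M \ W)) W S k
          (subset_sdiff.mpr ⟨hWn, disjoint_sdiff⟩) hS.1
          (le_trans (le_of_eq hS.2) (by omega))
        have hc2 : (((range n \ (M \ W)) \ W).card) = n - k - 2 := by
          rw [card_sdiff_of_subset (subset_sdiff.mpr ⟨hWn, disjoint_sdiff⟩),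
            card_sdiff_of_subset (sdiff_subset.trans hMn), hrc, hDc, hWc]
          omega
        rw [hrW, hS.2] at hX
        rw [hc2, hS.2] at hY
        have e2 : n - (t + 2) = n - t - 2 := by omega
        have e3 : k - (t + 1) = k - t - 1 := by omega
        rw [e2, e3] at hX
        rw [e3] at hY
        rw [hempty, hY] at hsplit
        rw [← hP] at hX
        rw [hX] at hsplit
        omega
      rw [sum_congr rfl hfib, sum_const, smul_eq_mul, card_powersetCard, hWc]
      congr 1
      rw [show t + 1 = t + 2 - 1 by omega, Nat.choose_symm (by omega), Nat.choose_one_right]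
    rw [filter_or, filter_or, card_union_of_disjoint hd1, card_union_of_disjoint hd2,
      c1, c2, c3]
    exact (add_assoc _ _ _).symm
end

section
/- Let n > 2k, k ≥ t+3, and let F ⊆ C([n],k) be a maximal t-intersecting family with τ_t(F) = t+2 and τ_t(T_t(F)) = t+2. If T_t(F) = C(Z, t+2) for some Z ∈ C([n], t+4), then F = {F ∈ C([n],k) : |F ∩ Z| ≥ t+2}. -/
/-!
Every `(t + 2)`-subset of `Z` is a `t`-cover of `𝓕`. Testing this on a `(t + 2)`-subset of `Z`
that avoids a member `F` as far as possible shows `|F ∩ Z| ≥ t + 2`, so `𝓕` is contained in the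
family `𝓖` of `k`-sets meeting `Z` in at least `t + 2` points. Two members of `𝓖` share at least
`2 (t + 2) - (t + 4) = t` points of `Z`, so `𝓖` is `t`-intersecting and maximality forces `𝓕 = 𝓖`.
-/

open Finset

section

variable {α : Type*} [DecidableEq α]

lemma le_card_inter_of_forall_powersetCard {Z F : Finset α} {m t : ℕ} (ht : 0 < t)
    (hm : m ≤ #Z) (h : ∀ S ∈ Z.powersetCard m, t ≤ #(S ∩ F)) :
    t + (#Z - m) ≤ #(F ∩ Z) := by
  have hsplit := card_sdiff_add_card_inter Z F
  rw [inter_comm Z F] at hsplit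
  rcases le_or_gt m #(Z \ F) with hfew | hmany
  · obtain ⟨S, hSsub, hScard⟩ := exists_subset_card_eq hfew
    have hdisj : S ∩ F = ∅ :=
      disjoint_iff_inter_eq_empty.mp (sdiff_disjoint.mono_left hSsub)
    have := h S (mem_powersetCard.mpr ⟨hSsub.trans sdiff_subset, hScard⟩)
    simp only [hdisj, card_empty] at this
    omega
  · obtain ⟨S, hsupS, hSsub, hScard⟩ := exists_subsuperset_card_eq sdiff_subset hmany.le hm
    have hSF : S ∩ F = S \ (Z \ F) := by
      ext x
      have := @hSsub x
      simp only [mem_inter, mem_sdiff]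
      tauto
    have := h S (mem_powersetCard.mpr ⟨hSsub, hScard⟩)
    rw [hSF, card_sdiff_of_subset hsupS, hScard] at this
    omega

lemma add_sub_card_le_card_inter {A B Z : Finset α} {a b : ℕ}
    (hA : a ≤ #(A ∩ Z)) (hB : b ≤ #(B ∩ Z)) : a + b - #Z ≤ #(A ∩ B) := by
  have hunion : #(A ∩ Z ∪ B ∩ Z) ≤ #Z :=
    card_le_card (union_subset inter_subset_right inter_subset_right)
  have hinter : #(A ∩ Z ∩ (B ∩ Z)) ≤ #(A ∩ B) :=
    card_le_card (inter_subset_inter inter_subset_left inter_subset_left)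
  have := card_union_add_card_inter (A ∩ Z) (B ∩ Z)
  omega

end

lemma intersecting_filter_le_card_inter (n k t : ℕ) (Z : Finset ℕ) (hZ : #Z = t + 4) :
    Intersecting t (((range n).powersetCard k).filter fun F => t + 2 ≤ #(F ∩ Z)) := by
  intro A hA B hB
  have := add_sub_card_le_card_inter (mem_filter.mp hA).2 (mem_filter.mp hB).2
  omega

lemma le_card_inter_of_mem_minCovers {n t : ℕ} {𝓕 : Finset (Finset ℕ)} {S A : Finset ℕ}
    (hS : S ∈ minCovers n t 𝓕) (hA : A ∈ 𝓕) : t ≤ #(S ∩ A) :=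
  (mem_filter.mp hS).2.1 A hA

lemma MaximalIntersecting.eq_of_subset {n k t : ℕ} {𝓕 𝓖 : Finset (Finset ℕ)}
    (hmax : MaximalIntersecting n k t 𝓕) (h𝓖 : 𝓖 ⊆ (range n).powersetCard k)
    (hint : Intersecting t 𝓖) (hsub : 𝓕 ⊆ 𝓖) : 𝓕 = 𝓖 :=
  (hmax.2.2 𝓖 h𝓖 hint hsub).symm

theorem stmt15_general (n k t : ℕ) (ht : 1 ≤ t)
    (𝓕 : Finset (Finset ℕ)) (hmax : MaximalIntersecting n k t 𝓕)
    (Z : Finset ℕ) (hZ : Z ∈ (Finset.range n).powersetCard (t + 4))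
    (hcov : minCovers n t 𝓕 = Z.powersetCard (t + 2)) :
    𝓕 = ((Finset.range n).powersetCard k).filter (fun F => t + 2 ≤ (F ∩ Z).card) := by
  have hZcard : #Z = t + 4 := (mem_powersetCard.mp hZ).2
  refine hmax.eq_of_subset (filter_subset _ _) (intersecting_filter_le_card_inter n k t Z hZcard)
    fun F hF => mem_filter.mpr ⟨hmax.1 hF, ?_⟩
  have hcovers : ∀ S ∈ Z.powersetCard (t + 2), t ≤ #(S ∩ F) := fun S hS =>
    le_card_inter_of_mem_minCovers (hcov ▸ hS) hF
  have := le_card_inter_of_forall_powersetCard ht (by omega) hcovers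
  omega

theorem stmt15 (n k t : ℕ) (ht : 1 ≤ t) (hk : t + 3 ≤ k) (hn : 2 * k < n)
    (𝓕 : Finset (Finset ℕ)) (hmax : MaximalIntersecting n k t 𝓕)
    (htau : tau n t 𝓕 = t + 2)
    (htau2 : tau n t (minCovers n t 𝓕) = t + 2)
    (Z : Finset ℕ) (hZ : Z ∈ (Finset.range n).powersetCard (t + 4))
    (hcov : minCovers n t 𝓕 = Z.powersetCard (t + 2)) :
    𝓕 = ((Finset.range n).powersetCard k).filter (fun F => t + 2 ≤ (F ∩ Z).card) :=
  stmt15_general n k t ht 𝓕 hmax Z hZ hcov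
end

section
/- Let n > 2k, k ≥ t+3, M ∈ C([n], k+2), W ∈ C(M, t+2), and let F ⊆ C([n],k) be a maximal t-intersecting family whose family of minimum t-covers equals {T ∈ C(M, t+2) : |T ∩ W| ≥ t+1}. Then F equals the family {F ∈ C([n],k) : W ⊆ F} ∪ {F ∈ C([n],k) : |F ∩ W| = t+1, F ∩ (M \ W) ≠ ∅} ∪ {F ∈ C(M,k) : |F ∩ W| = t}, and |F| > ((t+2)(k−t)+1)·C(n−t−2, k−t−2) − (t+2)(k−t)^2·C(n−t−3, k−t−3). -/
open Finset

/-- Telescoping estimate: `C(N,s+1) ≤ C(N-i,s+1) + i·C(N-1,s)`. -/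
lemma auxA (N s : ℕ) : ∀ i, i ≤ N → N.choose (s+1) ≤ (N - i).choose (s+1) + i * (N-1).choose s := by
  intro i
  induction i with
  | zero => simp
  | succ j ih =>
    intro hj
    have h1 := ih (by omega)
    have h2 : N - j = (N - (j+1)) + 1 := by omega
    have h3 : (N-j).choose (s+1) = (N-(j+1)).choose s + (N-(j+1)).choose (s+1) := by
      rw [h2, Nat.choose_succ_succ]
    have h4 : (N-(j+1)).choose s ≤ (N-1).choose s := Nat.choose_le_choose s (by omega)
    have h5 : (j+1) * (N-1).choose s = j * (N-1).choose s + (N-1).choose s := by ring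
    omega

/-- Main counting estimate:
`m·C(N,s+1) + C(N-m,s+2) ≤ C(N,s+2) + m²·C(N-1,s)`. -/
lemma auxB (N s : ℕ) : ∀ m, m ≤ N →
    m * N.choose (s+1) + (N - m).choose (s+2) ≤ N.choose (s+2) + m * m * (N-1).choose s := by
  intro m
  induction m with
  | zero => simp
  | succ j ih =>
    intro hj
    have h1 := ih (by omega)
    have h2 : N - j = (N - (j+1)) + 1 := by omega
    have h3 : (N-j).choose (s+2) = (N-(j+1)).choose (s+1) + (N-(j+1)).choose (s+2) := by
      rw [h2, Nat.choose_succ_succ]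
    have h4 := auxA N s (j+1) hj
    have h5 : (j+1) * N.choose (s+1) = j * N.choose (s+1) + N.choose (s+1) := by ring
    have h6 : (j+1) * (j+1) * (N-1).choose s
        = j * j * (N-1).choose s + (j+1) * (N-1).choose s + j * (N-1).choose s := by ring
    omega

set_option maxHeartbeats 2000000 in
theorem stmt16 (n k t : ℕ) (ht : 1 ≤ t) (hk : t + 3 ≤ k) (hn : 2 * k < n)
    (M W : Finset ℕ) (hM : M ∈ (Finset.range n).powersetCard (k + 2))
    (hW : W ∈ M.powersetCard (t + 2))
    (𝓕 : Finset (Finset ℕ)) (hmax : MaximalIntersecting n k t 𝓕)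
    (hcov : minCovers n t 𝓕 = (M.powersetCard (t + 2)).filter (fun T => t + 1 ≤ (T ∩ W).card)) :
    𝓕 = ((Finset.range n).powersetCard k).filter
      (fun F => W ⊆ F ∨ ((F ∩ W).card = t + 1 ∧ (F ∩ (M \ W)).Nonempty) ∨
        (F ⊆ M ∧ (F ∩ W).card = t)) ∧
    (((t : ℤ) + 2) * ((k : ℤ) - t) + 1) * ((n - t - 2).choose (k - t - 2) : ℤ) -
      ((t : ℤ) + 2) * ((k : ℤ) - t) ^ 2 * ((n - t - 3).choose (k - t - 3) : ℤ) <
      (𝓕.card : ℤ) := by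
  classical
  obtain ⟨h𝓕sub, h𝓕int, h𝓕max⟩ := hmax
  rw [Finset.mem_powersetCard] at hM hW
  obtain ⟨hMsub, hMcard⟩ := hM
  obtain ⟨hWM, hWcard⟩ := hW
  have hWsub : W ⊆ Finset.range n := hWM.trans hMsub
  have hMW : (M \ W).card = k - t := by
    have := Finset.card_inter_add_card_sdiff M W
    rw [Finset.inter_eq_right.mpr hWM, hWcard, hMcard] at this
    omega
  -- membership in minCovers, unfolded
  have hmc : ∀ S : Finset ℕ, S ∈ minCovers n t 𝓕 ↔
      (S ⊆ Finset.range n ∧ (∀ A ∈ 𝓕, t ≤ (S ∩ A).card) ∧ S.card = tau n t 𝓕) := by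
    intro S
    simp [minCovers, Finset.mem_filter, Finset.mem_powerset, and_assoc]
  -- W is a minimum cover
  have hWmem : W ∈ minCovers n t 𝓕 := by
    rw [hcov, Finset.mem_filter, Finset.mem_powersetCard]
    refine ⟨⟨hWM, hWcard⟩, ?_⟩
    rw [Finset.inter_self, hWcard]; omega
  have hWmc := (hmc W).mp hWmem
  have htau : tau n t 𝓕 = t + 2 := by
    have := hWmc.2.2; rw [hWcard] at this; omega
  have hcovW : ∀ A ∈ 𝓕, t ≤ (W ∩ A).card := hWmc.2.1
  -- every listed T is a cover
  have hlist : ∀ T : Finset ℕ, T ⊆ M → T.card = t+2 → t+1 ≤ (T ∩ W).card →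
      ∀ A ∈ 𝓕, t ≤ (T ∩ A).card := by
    intro T hTM hTc hTW
    have : T ∈ minCovers n t 𝓕 := by
      rw [hcov, Finset.mem_filter, Finset.mem_powersetCard]
      exact ⟨⟨hTM, hTc⟩, hTW⟩
    exact ((hmc T).mp this).2.1
  -- no (t+1)-cover
  have hno : ∀ S : Finset ℕ, S ⊆ Finset.range n → S.card = t+1 →
      ¬ (∀ A ∈ 𝓕, t ≤ (S ∩ A).card) := by
    intro S hS hSc hall
    have : tau n t 𝓕 ≤ t+1 := Nat.sInf_le ⟨S, ⟨hS, hall⟩, hSc⟩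
    omega
  -- basic facts about members of 𝓕
  have hFfact : ∀ A ∈ 𝓕, A ⊆ Finset.range n ∧ A.card = k := by
    intro A hA
    have := h𝓕sub hA
    rwa [Finset.mem_powersetCard] at this
  -- Lemma (ii): members meeting W in exactly t points lie inside M
  have lemii : ∀ A ∈ 𝓕, (A ∩ W).card = t → (M \ W ⊆ A ∧ A ⊆ M) := by
    intro A hA hAW
    obtain ⟨hAsub, hAcard⟩ := hFfact A hA
    have hsub : M \ W ⊆ A := by
      by_contra hcon
      obtain ⟨z, hzMW, hzA⟩ := Finset.not_subset.mp hcon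
      have hzM : z ∈ M := (Finset.mem_sdiff.mp hzMW).1
      have hzW : z ∉ W := (Finset.mem_sdiff.mp hzMW).2
      obtain ⟨w0, hw0⟩ : (A ∩ W).Nonempty := Finset.card_pos.mp (by omega)
      have hw0A : w0 ∈ A := (Finset.mem_inter.mp hw0).1
      have hw0W : w0 ∈ W := (Finset.mem_inter.mp hw0).2
      set T := insert z (W.erase w0) with hT
      have hTM : T ⊆ M := Finset.insert_subset hzM ((Finset.erase_subset _ _).trans hWM)
      have hzE : z ∉ W.erase w0 := fun h => hzW (Finset.erase_subset _ _ h)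
      have hTc : T.card = t + 2 := by
        rw [hT, Finset.card_insert_of_notMem hzE, Finset.card_erase_of_mem hw0W, hWcard]
        omega
      have hTWeq : T ∩ W = W.erase w0 := by
        rw [hT, Finset.insert_inter_of_notMem hzW, Finset.erase_inter,
          Finset.inter_self]
      have hTW : t + 1 ≤ (T ∩ W).card := by
        rw [hTWeq, Finset.card_erase_of_mem hw0W, hWcard]
        omega
      have hTA : T ∩ A = (W ∩ A).erase w0 := by
        rw [hT, Finset.insert_inter_of_notMem hzA, Finset.erase_inter]
      have hcov' := hlist T hTM hTc hTW A hA
      rw [hTA, Finset.card_erase_of_mem (Finset.mem_inter.mpr ⟨hw0W, hw0A⟩),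
        Finset.inter_comm, hAW] at hcov'
      omega
    refine ⟨hsub, ?_⟩
    have h1 : (A ∩ W) ∪ (M \ W) ⊆ A ∩ M := by
      apply Finset.union_subset
      · exact Finset.inter_subset_inter Finset.Subset.rfl hWM
      · exact Finset.subset_inter hsub Finset.sdiff_subset
    have hcardU : ((A ∩ W) ∪ (M \ W)).card = t + (k - t) := by
      rw [Finset.card_union_of_disjoint (Finset.disjoint_left.mpr (fun x hx hx' => by
        have := (Finset.mem_inter.mp hx).2
        exact (Finset.mem_sdiff.mp hx').2 this)), hAW, hMW]
    have hle : k ≤ (A ∩ M).card := by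
      have := Finset.card_le_card h1
      rw [hcardU] at this
      omega
    have heq : A ∩ M = A := Finset.eq_of_subset_of_card_le
      Finset.inter_subset_left (by rw [hAcard]; exact hle)
    exact Finset.inter_eq_left.mp heq
  -- Lemma (i): members meeting W in exactly t+1 points must meet M \ W
  have lemi : ∀ A ∈ 𝓕, (A ∩ W).card = t + 1 → (A ∩ (M \ W)).Nonempty := by
    intro A hA hAW
    by_contra hempty
    rw [Finset.not_nonempty_iff_eq_empty] at hempty
    have hWA : (W \ A).card = 1 := by
      have h1 := Finset.card_inter_add_card_sdiff W A
      rw [Finset.inter_comm] at h1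
      omega
    obtain ⟨x, hx⟩ := Finset.card_eq_one.mp hWA
    have hxWA : x ∈ W \ A := hx ▸ Finset.mem_singleton_self x
    have hxW : x ∈ W := (Finset.mem_sdiff.mp hxWA).1
    have hxA : x ∉ A := (Finset.mem_sdiff.mp hxWA).2
    by_cases hex : ∃ A' ∈ 𝓕, (A' ∩ W).card = t ∧ x ∈ A'
    · obtain ⟨A', hA', hA'W, hxA'⟩ := hex
      have hA'M : A' ⊆ M := (lemii A' hA' hA'W).2
      have hint := h𝓕int A hA A' hA'
      have hss : A ∩ A' ⊆ (A' ∩ W).erase x := by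
        intro y hy
        have hyA : y ∈ A := (Finset.mem_inter.mp hy).1
        have hyA' : y ∈ A' := (Finset.mem_inter.mp hy).2
        have hyW : y ∈ W := by
          by_contra hyW
          have hyMW : y ∈ M \ W := Finset.mem_sdiff.mpr ⟨hA'M hyA', hyW⟩
          have : y ∈ A ∩ (M \ W) := Finset.mem_inter.mpr ⟨hyA, hyMW⟩
          rw [hempty] at this
          exact Finset.notMem_empty y this
        exact Finset.mem_erase.mpr ⟨fun h => hxA (h ▸ hyA), Finset.mem_inter.mpr ⟨hyA', hyW⟩⟩
      have hle := Finset.card_le_card hss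
      rw [Finset.card_erase_of_mem (Finset.mem_inter.mpr ⟨hxA', hxW⟩), hA'W] at hle
      omega
    · push_neg at hex
      refine hno (W.erase x) ((Finset.erase_subset _ _).trans hWsub)
        (by rw [Finset.card_erase_of_mem hxW, hWcard]; omega) ?_
      intro B hB
      have hWB := hcovW B hB
      by_contra hlt
      push_neg at hlt
      rw [Finset.erase_inter] at hlt
      have hxB : x ∈ W ∩ B := by
        by_contra hxB
        rw [Finset.erase_eq_of_notMem hxB] at hlt
        omega
      have hcardWB : (W ∩ B).card = t := by
        rw [Finset.card_erase_of_mem hxB] at hlt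
        omega
      exact hex B hB (by rw [Finset.inter_comm]; exact hcardWB) (Finset.mem_inter.mp hxB).2
  -- the target family
  set 𝓖 := ((Finset.range n).powersetCard k).filter
      (fun F => W ⊆ F ∨ ((F ∩ W).card = t + 1 ∧ (F ∩ (M \ W)).Nonempty) ∨
        (F ⊆ M ∧ (F ∩ W).card = t)) with h𝓖
  -- 𝓕 ⊆ 𝓖
  have hFG : 𝓕 ⊆ 𝓖 := by
    intro F hF
    obtain ⟨hFsub, hFcard⟩ := hFfact F hF
    refine Finset.mem_filter.mpr ⟨h𝓕sub hF, ?_⟩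
    have h1 := hcovW F hF
    rw [Finset.inter_comm] at h1
    have h2 : (F ∩ W).card ≤ t + 2 := by
      have := Finset.card_le_card (Finset.inter_subset_right (s₁ := F) (s₂ := W))
      omega
    rcases Nat.lt_or_ge (F ∩ W).card (t+1) with h | h
    · exact Or.inr (Or.inr ⟨(lemii F hF (by omega)).2, by omega⟩)
    rcases Nat.lt_or_ge (F ∩ W).card (t+2) with h' | h'
    · exact Or.inr (Or.inl ⟨by omega, lemi F hF (by omega)⟩)
    · left
      have : F ∩ W = W := Finset.eq_of_subset_of_card_le
        Finset.inter_subset_right (by omega)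
      rw [← this]
      exact Finset.inter_subset_left
  -- members of 𝓖 of the third kind contain M \ W
  have hP3 : ∀ B : Finset ℕ, B.card = k → B ⊆ M → (B ∩ W).card = t → M \ W ⊆ B := by
    intro B hBc hBM hBW
    have h1 : B \ W ⊆ M \ W := Finset.sdiff_subset_sdiff hBM Finset.Subset.rfl
    have h2 : (B \ W).card = k - t := by
      have := Finset.card_inter_add_card_sdiff B W
      omega
    have h3 : B \ W = M \ W := Finset.eq_of_subset_of_card_le h1 (by omega)
    rw [← h3]
    exact Finset.sdiff_subset
  -- intersection bound inside W
  have keyW : ∀ X Y : Finset ℕ,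
      (X ∩ W).card + (Y ∩ W).card ≤ ((X ∩ W) ∩ (Y ∩ W)).card + (t + 2) := by
    intro X Y
    have h1 := Finset.card_union_add_card_inter (X ∩ W) (Y ∩ W)
    have h2 : (X ∩ W) ∪ (Y ∩ W) ⊆ W :=
      Finset.union_subset Finset.inter_subset_right Finset.inter_subset_right
    have h3 := Finset.card_le_card h2
    omega
  have hXY : ∀ X Y : Finset ℕ, (X ∩ W) ∩ (Y ∩ W) ⊆ X ∩ Y := by
    intro X Y y hy
    have h1 := Finset.mem_inter.mp hy
    exact Finset.mem_inter.mpr ⟨(Finset.mem_inter.mp h1.1).1, (Finset.mem_inter.mp h1.2).1⟩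
  -- helper: W ⊆ X and Y meets W in ≥ t points
  have key1 : ∀ X Y : Finset ℕ, W ⊆ X → t ≤ (Y ∩ W).card → t ≤ (X ∩ Y).card := by
    intro X Y hWX hYW
    refine hYW.trans (Finset.card_le_card ?_)
    intro y hy
    have h1 := Finset.mem_inter.mp hy
    exact Finset.mem_inter.mpr ⟨hWX h1.2, h1.1⟩
  -- helper for case (2,3)
  have key23 : ∀ X Y : Finset ℕ, (X ∩ W).card = t + 1 → (X ∩ (M \ W)).Nonempty →
      Y.card = k → Y ⊆ M → (Y ∩ W).card = t → t ≤ (X ∩ Y).card := by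
    intro X Y hXW ⟨z, hz⟩ hYc hYM hYW
    have hMWY := hP3 Y hYc hYM hYW
    have hzX : z ∈ X := (Finset.mem_inter.mp hz).1
    have hzMW : z ∈ M \ W := (Finset.mem_inter.mp hz).2
    have hzW : z ∉ W := (Finset.mem_sdiff.mp hzMW).2
    have hzY : z ∈ Y := hMWY hzMW
    have hsub : insert z ((X ∩ W) ∩ (Y ∩ W)) ⊆ X ∩ Y :=
      Finset.insert_subset (Finset.mem_inter.mpr ⟨hzX, hzY⟩) (hXY X Y)
    have hzn : z ∉ (X ∩ W) ∩ (Y ∩ W) := fun h =>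
      hzW (Finset.mem_inter.mp (Finset.mem_inter.mp h).1).2
    have hc := Finset.card_le_card hsub
    rw [Finset.card_insert_of_notMem hzn] at hc
    have := keyW X Y
    omega
  have hGint : Intersecting t 𝓖 := by
    intro A hA B hB
    obtain ⟨hAP, hApred⟩ := Finset.mem_filter.mp hA
    obtain ⟨hBP, hBpred⟩ := Finset.mem_filter.mp hB
    rw [Finset.mem_powersetCard] at hAP hBP
    rcases hApred with hA1 | ⟨hA2, hA2'⟩ | ⟨hA3, hA3'⟩
    · rcases hBpred with hB1 | ⟨hB2, _⟩ | ⟨_, hB3'⟩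
      · exact key1 A B hA1 (by
          rw [Finset.inter_eq_right.mpr hB1, hWcard]; omega)
      · exact key1 A B hA1 (by omega)
      · exact key1 A B hA1 (by omega)
    · rcases hBpred with hB1 | ⟨hB2, _⟩ | ⟨hB3, hB3'⟩
      · rw [Finset.inter_comm]
        exact key1 B A hB1 (by omega)
      · have := keyW A B
        have := Finset.card_le_card (hXY A B)
        omega
      · exact key23 A B hA2 hA2' hBP.2 hB3 hB3'
    · rcases hBpred with hB1 | ⟨hB2, hB2'⟩ | ⟨hB3, hB3'⟩
      · rw [Finset.inter_comm]
        exact key1 B A hB1 (by omega)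
      · rw [Finset.inter_comm]
        exact key23 B A hB2 hB2' hAP.2 hA3 hA3'
      · -- both of the third kind
        have hMWA := hP3 A hAP.2 hA3 hA3'
        have hMWB := hP3 B hBP.2 hB3 hB3'
        have hsub : (M \ W) ∪ ((A ∩ W) ∩ (B ∩ W)) ⊆ A ∩ B := by
          refine Finset.union_subset ?_ (hXY A B)
          intro y hy
          exact Finset.mem_inter.mpr ⟨hMWA hy, hMWB hy⟩
        have hdisj : Disjoint (M \ W) ((A ∩ W) ∩ (B ∩ W)) := by
          rw [Finset.disjoint_left]
          intro y hy hy'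
          exact (Finset.mem_sdiff.mp hy).2 (Finset.mem_inter.mp (Finset.mem_inter.mp hy').1).2
        have hc := Finset.card_le_card hsub
        rw [Finset.card_union_of_disjoint hdisj, hMW] at hc
        have := keyW A B
        omega
  -- maximality: 𝓖 = 𝓕
  have hGF : 𝓖 = 𝓕 := h𝓕max 𝓖 (Finset.filter_subset _ _) hGint hFG
  refine ⟨hGF.symm, ?_⟩
  -- counting
  have hRW : ((Finset.range n) \ W).card = n - t - 2 := by
    rw [Finset.card_sdiff_of_subset hWsub, Finset.card_range, hWcard]
    omega
  have hRM : ((Finset.range n) \ M).card = n - k - 2 := by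
    rw [Finset.card_sdiff_of_subset hMsub, Finset.card_range, hMcard]
    omega
  -- the three witness families
  set S1 := (((Finset.range n) \ W).powersetCard (k-t-2)).image (· ∪ W) with hS1
  set Q := ((((Finset.range n) \ W).powersetCard (k-t-1)).filter
      (fun X => (X ∩ (M \ W)).Nonempty)) with hQ
  set S2 := ((W.powersetCard (t+1)) ×ˢ Q).image (fun p => p.1 ∪ p.2) with hS2
  obtain ⟨S0, hS0W, hS0c⟩ := Finset.exists_subset_card_eq (show t ≤ W.card by omega)
  set c := S0 ∪ (M \ W) with hc
  -- disjointness helpers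
  have hdisjXW : ∀ X : Finset ℕ, X ⊆ (Finset.range n) \ W → Disjoint X W := by
    intro X hX
    rw [Finset.disjoint_left]
    intro a ha haW
    exact (Finset.mem_sdiff.mp (hX ha)).2 haW
  -- S1 membership facts
  have hS1mem : ∀ F ∈ S1, F ∈ 𝓕 ∧ (F ∩ W).card = t + 2 := by
    intro F hF
    obtain ⟨X, hX, rfl⟩ := Finset.mem_image.mp hF
    rw [Finset.mem_powersetCard] at hX
    obtain ⟨hXsub, hXc⟩ := hX
    have hWF : W ⊆ X ∪ W := Finset.subset_union_right
    have hFW : (X ∪ W) ∩ W = W := Finset.inter_eq_right.mpr hWF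
    constructor
    · rw [← hGF]
      refine Finset.mem_filter.mpr ⟨Finset.mem_powersetCard.mpr ⟨?_, ?_⟩, Or.inl hWF⟩
      · exact Finset.union_subset (hXsub.trans Finset.sdiff_subset) hWsub
      · rw [Finset.card_union_of_disjoint (hdisjXW X hXsub), hXc, hWcard]
        omega
    · rw [hFW, hWcard]
  have hS2mem : ∀ F ∈ S2, F ∈ 𝓕 ∧ (F ∩ W).card = t + 1 := by
    intro F hF
    obtain ⟨p, hp, rfl⟩ := Finset.mem_image.mp hF
    obtain ⟨hp1, hp2⟩ := Finset.mem_product.mp hp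
    rw [Finset.mem_powersetCard] at hp1
    obtain ⟨hY, hYc⟩ := hp1
    rw [hQ, Finset.mem_filter, Finset.mem_powersetCard] at hp2
    obtain ⟨⟨hXsub, hXc⟩, hXne⟩ := hp2
    have hFW : (p.1 ∪ p.2) ∩ W = p.1 := by
      rw [Finset.union_inter_distrib_right, Finset.inter_eq_left.mpr hY,
        Finset.disjoint_iff_inter_eq_empty.mp (hdisjXW p.2 hXsub), Finset.union_empty]
    constructor
    · rw [← hGF]
      refine Finset.mem_filter.mpr ⟨Finset.mem_powersetCard.mpr ⟨?_, ?_⟩,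
        Or.inr (Or.inl ⟨by rw [hFW]; exact hYc, ?_⟩)⟩
      · exact Finset.union_subset (hY.trans hWsub) (hXsub.trans Finset.sdiff_subset)
      · rw [Finset.card_union_of_disjoint (by
          rw [Finset.disjoint_left]
          intro a ha ha2
          exact (Finset.mem_sdiff.mp (hXsub ha2)).2 (hY ha)), hYc, hXc]
        omega
      · obtain ⟨z, hz⟩ := hXne
        exact ⟨z, Finset.mem_inter.mpr ⟨Finset.mem_union_right _ (Finset.mem_inter.mp hz).1,
          (Finset.mem_inter.mp hz).2⟩⟩
    · rw [hFW, hYc]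
  have hcmem : c ∈ 𝓕 ∧ (c ∩ W).card = t := by
    have hdisj : Disjoint S0 (M \ W) := by
      rw [Finset.disjoint_left]
      intro a ha ha2
      exact (Finset.mem_sdiff.mp ha2).2 (hS0W ha)
    have hcW : c ∩ W = S0 := by
      rw [hc, Finset.union_inter_distrib_right, Finset.inter_eq_left.mpr hS0W,
        Finset.sdiff_inter_self, Finset.union_empty]
    have hcM : c ⊆ M := Finset.union_subset (hS0W.trans hWM) Finset.sdiff_subset
    have hccard : c.card = k := by
      rw [hc, Finset.card_union_of_disjoint hdisj, hS0c, hMW]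
      omega
    constructor
    · rw [← hGF]
      refine Finset.mem_filter.mpr ⟨Finset.mem_powersetCard.mpr ⟨hcM.trans hMsub, hccard⟩,
        Or.inr (Or.inr ⟨hcM, by rw [hcW, hS0c]⟩)⟩
    · rw [hcW, hS0c]
  -- cardinalities
  have hS1card : S1.card = (n - t - 2).choose (k - t - 2) := by
    have hinj : Set.InjOn (· ∪ W) ((((Finset.range n) \ W).powersetCard (k-t-2)) : Set (Finset ℕ)) := by
      intro X hX Y hY hXY
      simp only [Finset.mem_coe, Finset.mem_powersetCard] at hX hY
      have hXY' : X ∪ W = Y ∪ W := hXY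
      have h1 : (X ∪ W) \ W = X := Finset.union_sdiff_cancel_right (hdisjXW X hX.1)
      have h2 : (Y ∪ W) \ W = Y := Finset.union_sdiff_cancel_right (hdisjXW Y hY.1)
      rw [← h1, ← h2, hXY']
    rw [hS1, Finset.card_image_of_injOn hinj, Finset.card_powersetCard, hRW]
  have hS2card : S2.card = (t + 2) * Q.card := by
    have hinj : Set.InjOn (fun p : Finset ℕ × Finset ℕ => p.1 ∪ p.2)
        ((((W.powersetCard (t+1)) ×ˢ Q) : Finset (Finset ℕ × Finset ℕ)) : Set (Finset ℕ × Finset ℕ)) := by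
      intro p hp q hq hpq
      have hp' : p ∈ (W.powersetCard (t+1)) ×ˢ Q := hp
      have hq' : q ∈ (W.powersetCard (t+1)) ×ˢ Q := hq
      rw [Finset.mem_product] at hp' hq'
      obtain ⟨hp1, hp2⟩ := hp'
      obtain ⟨hq1, hq2⟩ := hq'
      rw [Finset.mem_powersetCard] at hp1 hq1
      rw [Finset.mem_filter, Finset.mem_powersetCard] at hp2 hq2
      have hpq' : p.1 ∪ p.2 = q.1 ∪ q.2 := hpq
      have e1 : ∀ r : Finset ℕ × Finset ℕ, r.1 ⊆ W → r.2 ⊆ (Finset.range n) \ W →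
          (r.1 ∪ r.2) ∩ W = r.1 ∧ (r.1 ∪ r.2) \ W = r.2 := by
        intro r h1 h2
        constructor
        · rw [Finset.union_inter_distrib_right, Finset.inter_eq_left.mpr h1,
            Finset.disjoint_iff_inter_eq_empty.mp (hdisjXW r.2 h2), Finset.union_empty]
        · rw [Finset.union_sdiff_distrib, Finset.sdiff_eq_empty_iff_subset.mpr h1,
            Finset.empty_union, (hdisjXW r.2 h2).sdiff_eq_left]
      obtain ⟨ha1, ha2⟩ := e1 p hp1.1 hp2.1.1
      obtain ⟨hb1, hb2⟩ := e1 q hq1.1 hq2.1.1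
      have h1 : p.1 = q.1 := by rw [← ha1, ← hb1, hpq']
      have h2 : p.2 = q.2 := by rw [← ha2, ← hb2, hpq']
      exact Prod.ext h1 h2
    rw [hS2, Finset.card_image_of_injOn hinj, Finset.card_product, Finset.card_powersetCard,
      hWcard, Nat.choose_succ_self_right]
  have hQcard : Q.card + (n - k - 2).choose (k - t - 1) = (n - t - 2).choose (k - t - 1) := by
    have hfilt : (((Finset.range n) \ W).powersetCard (k-t-1)).filter
        (fun X => ¬ (X ∩ (M \ W)).Nonempty) = ((Finset.range n) \ M).powersetCard (k-t-1) := by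
      ext X
      simp only [Finset.mem_filter, Finset.mem_powersetCard, Finset.not_nonempty_iff_eq_empty]
      constructor
      · rintro ⟨⟨hXsub, hXc⟩, hXe⟩
        refine ⟨?_, hXc⟩
        intro a ha
        have h1 := Finset.mem_sdiff.mp (hXsub ha)
        refine Finset.mem_sdiff.mpr ⟨h1.1, fun haM => ?_⟩
        have : a ∈ X ∩ (M \ W) := Finset.mem_inter.mpr ⟨ha, Finset.mem_sdiff.mpr ⟨haM, h1.2⟩⟩
        rw [hXe] at this
        exact Finset.notMem_empty a this
      · rintro ⟨hXsub, hXc⟩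
        refine ⟨⟨?_, hXc⟩, ?_⟩
        · intro a ha
          have h1 := Finset.mem_sdiff.mp (hXsub ha)
          exact Finset.mem_sdiff.mpr ⟨h1.1, fun haW => h1.2 (hWM haW)⟩
        · rw [Finset.eq_empty_iff_forall_notMem]
          intro a ha
          obtain ⟨haX, haMW⟩ := Finset.mem_inter.mp ha
          exact (Finset.mem_sdiff.mp (hXsub haX)).2 (Finset.mem_sdiff.mp haMW).1
    have hmain := Finset.card_filter_add_card_filter_not
      (s := ((Finset.range n) \ W).powersetCard (k-t-1))
      (p := fun X => (X ∩ (M \ W)).Nonempty)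
    rw [hfilt] at hmain
    rw [hQ]
    rw [Finset.card_powersetCard, Finset.card_powersetCard, hRW, hRM] at hmain
    exact hmain
  -- assemble the lower bound on the size of 𝓕
  have hsubF : (S1 ∪ S2) ∪ {c} ⊆ 𝓕 := by
    intro F hF
    rcases Finset.mem_union.mp hF with h | h
    · rcases Finset.mem_union.mp h with h1 | h2
      · exact (hS1mem F h1).1
      · exact (hS2mem F h2).1
    · rw [Finset.mem_singleton.mp h]
      exact hcmem.1
  have hd1 : Disjoint S1 S2 := by
    rw [Finset.disjoint_left]
    intro F h1 h2
    have e1 := (hS1mem F h1).2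
    have e2 := (hS2mem F h2).2
    omega
  have hd2 : Disjoint (S1 ∪ S2) {c} := by
    rw [Finset.disjoint_right]
    intro F hFc hFu
    rw [Finset.mem_singleton] at hFc
    subst hFc
    have e3 := hcmem.2
    rcases Finset.mem_union.mp hFu with h | h
    · have := (hS1mem c h).2
      omega
    · have := (hS2mem c h).2
      omega
  have hcount : (n-t-2).choose (k-t-2) + (t+2) * Q.card + 1 ≤ 𝓕.card := by
    have h1 := Finset.card_le_card hsubF
    rw [Finset.card_union_of_disjoint hd2, Finset.card_union_of_disjoint hd1,
      Finset.card_singleton, hS1card, hS2card] at h1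
    exact h1
  -- binomial estimate
  have hmain := auxB (n-t-2) (k-t-3) (k-t) (by omega)
  have e1 : k-t-3+1 = k-t-2 := by omega
  have e2 : k-t-3+2 = k-t-1 := by omega
  have e3 : n-t-2-(k-t) = n-k-2 := by omega
  have e4 : n-t-2-1 = n-t-3 := by omega
  rw [e1, e2, e3, e4] at hmain
  -- pass to ℤ
  have htk : t ≤ k := by omega
  have hKcast : ((k:ℤ) - t) = ((k - t : ℕ) : ℤ) := (Nat.cast_sub htk).symm
  have hZ1 : ((k - t : ℕ) : ℤ) * ((n-t-2).choose (k-t-2) : ℤ) + ((n-k-2).choose (k-t-1) : ℤ)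
      ≤ ((n-t-2).choose (k-t-1) : ℤ)
        + ((k-t:ℕ):ℤ) * ((k-t:ℕ):ℤ) * ((n-t-3).choose (k-t-3) : ℤ) := by
    exact_mod_cast hmain
  have hZ2 : (Q.card : ℤ) = ((n-t-2).choose (k-t-1) : ℤ) - ((n-k-2).choose (k-t-1) : ℤ) := by
    have : (Q.card : ℤ) + ((n-k-2).choose (k-t-1) : ℤ) = ((n-t-2).choose (k-t-1) : ℤ) := by
      exact_mod_cast hQcard
    linarith
  have hZ3 : ((n-t-2).choose (k-t-2) : ℤ) + ((t:ℤ)+2) * (Q.card : ℤ) + 1 ≤ (𝓕.card : ℤ) := by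
    exact_mod_cast hcount
  have ht2 : (0:ℤ) ≤ (t:ℤ) + 2 := by positivity
  have hZ4 := mul_le_mul_of_nonneg_left hZ1 ht2
  have hZ5 : ((t:ℤ)+2) * (Q.card : ℤ)
      = ((t:ℤ)+2) * ((n-t-2).choose (k-t-1) : ℤ) - ((t:ℤ)+2) * ((n-k-2).choose (k-t-1) : ℤ) := by
    rw [hZ2]; ring
  rw [hKcast, sq]
  linarith [hZ4, hZ3, hZ5]
end
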